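/- arXiv:1509.03617 — 15 statements merged into one kernel-verified Lean document; each statement's English description precedes it below -/
import Mathlib

section
/- Let f : M → N be a morphism in 𝒜 and γ ∈ R such that γ·id_{ker(f)} = 0 and γ·id_{coker(f)} = 0. Then there exists a morphism g : N → M in 𝒜 such that g ∘ f = γ²·id_M and f ∘ g = γ²·id_N. -/
open CategoryTheory CategoryTheory.Limits

/-- Let `R` be a commutative ring and `𝒜` an `R`-linear abelian category. If `f : M ⟶ N`
is a morphism and `γ ∈ R` annihilates the identities of `ker f` and `coker f`, then there
is a morphism `g : N ⟶ M` with `g ∘ f = γ² · id_M` and `f ∘ g = γ² · id_N`. -/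
theorem statement0 {R : Type*} [CommRing R] {𝒜 : Type*} [Category 𝒜] [Abelian 𝒜]
    [Linear R 𝒜] {M N : 𝒜} (f : M ⟶ N) (γ : R)
    (hker : γ • (𝟙 (kernel f)) = 0) (hcoker : γ • (𝟙 (cokernel f)) = 0) :
    ∃ g : N ⟶ M, f ≫ g = (γ ^ 2) • 𝟙 M ∧ g ≫ f = (γ ^ 2) • 𝟙 N := by
  have h1 : kernel.ι f ≫ (γ • 𝟙 M) = 0 := by
    have : kernel.ι f ≫ (γ • 𝟙 M) = (γ • 𝟙 (kernel f)) ≫ kernel.ι f := by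
      simp [Linear.comp_smul, Linear.smul_comp]
    rw [this, hker, Limits.zero_comp]
  have h2 : (γ • 𝟙 N) ≫ cokernel.π f = 0 := by
    have : (γ • 𝟙 N) ≫ cokernel.π f = cokernel.π f ≫ (γ • 𝟙 (cokernel f)) := by
      simp [Linear.comp_smul, Linear.smul_comp]
    rw [this, hcoker, Limits.comp_zero]
  set u : Abelian.coimage f ⟶ M := cokernel.desc (kernel.ι f) (γ • 𝟙 M) h1 with hu
  set v : N ⟶ Abelian.image f := kernel.lift (cokernel.π f) (γ • 𝟙 N) h2 with hv
  have hπu : Abelian.coimage.π f ≫ u = γ • 𝟙 M := cokernel.π_desc _ _ _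
  have hvι : v ≫ Abelian.image.ι f = γ • 𝟙 N := kernel.lift_ι _ _ _
  set c := Abelian.coimageImageComparison f with hc
  have hfac : Abelian.coimage.π f ≫ c ≫ Abelian.image.ι f = f :=
    Abelian.coimage_image_factorisation f
  refine ⟨v ≫ inv c ≫ u, ?_, ?_⟩
  · have hfv : f ≫ v = γ • (Abelian.coimage.π f ≫ c) := by
      rw [← cancel_mono (Abelian.image.ι f)]
      rw [Category.assoc, hvι, Linear.smul_comp, Category.assoc, hfac]
      simp [Linear.comp_smul]
    rw [← Category.assoc, hfv]
    simp only [Linear.smul_comp, Category.assoc, IsIso.hom_inv_id_assoc]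
    rw [hπu, smul_smul, pow_two]
  · have huf : u ≫ f = γ • (c ≫ Abelian.image.ι f) := by
      rw [← cancel_epi (Abelian.coimage.π f)]
      rw [← Category.assoc, hπu, Linear.comp_smul, hfac]
      simp [Linear.smul_comp]
    rw [Category.assoc, Category.assoc, huf]
    simp only [Linear.comp_smul, IsIso.inv_hom_id_assoc]
    rw [hvι, smul_smul, pow_two]
end

section
/- A morphism f : M → N of R-modules is an α-isomorphism if and only if the induced map id_m ⊗ f : m ⊗_R M → m ⊗_R N is an isomorphism of R-modules. -/
/-!
Since `Λ` is dense, every `π^ε` factors as `π^δ · (unit · π^(ε-δ))` with `0 < δ < ε`, so `m² = m`;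
for an idempotent ideal, `m ⊗ X = 0` exactly when `m` kills `X`. Moreover finitely many elements
of `m` share a common divisor `π^δ`, which is a non-zero-divisor, so every relation in `m` is
trivial and `m` is flat. For a flat module `F` the kernel and cokernel of `F ⊗ f` are `F ⊗ ker f`
and `F ⊗ coker f`, and the theorem follows.
-/

open scoped TensorProduct

theorem LinearMap.lTensor_surjective_iff_subsingleton {R : Type*} [CommRing R]
    (F : Type*) [AddCommGroup F] [Module R F] {M N : Type*} [AddCommGroup M] [Module R M]
    [AddCommGroup N] [Module R N] (f : M →ₗ[R] N) :
    Function.Surjective (f.lTensor F) ↔ Subsingleton (F ⊗[R] (N ⧸ range f)) := by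
  have hexact := lTensor_exact F (exact_map_mkQ_range f) (Submodule.mkQ_surjective _)
  rw [surjective_iff_eq_zero_of_exact hexact]
  refine ⟨fun h ↦ ⟨fun b b' ↦ ?_⟩, fun _ ↦ Subsingleton.elim _ _⟩
  obtain ⟨a, rfl⟩ := lTensor_surjective F (Submodule.mkQ_surjective _) b
  obtain ⟨a', rfl⟩ := lTensor_surjective F (Submodule.mkQ_surjective _) b'
  simp [h]

theorem Module.Flat.lTensor_injective_iff_subsingleton {R : Type*} [CommRing R]
    (F : Type*) [AddCommGroup F] [Module R F] [Module.Flat R F] {M N : Type*} [AddCommGroup M]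
    [Module R M] [AddCommGroup N] [Module R N] (f : M →ₗ[R] N) :
    Function.Injective (f.lTensor F) ↔ Subsingleton (F ⊗[R] LinearMap.ker f) := by
  have hexact := lTensor_exact F (LinearMap.exact_subtype_ker_map f)
  have hinj := lTensor_preserves_injective_linearMap (M := F) _ (LinearMap.ker f).injective_subtype
  rw [LinearMap.injective_iff_eq_zero_of_exact hexact]
  exact ⟨fun h ↦ ⟨fun a b ↦ hinj (by simp [h])⟩, fun _ ↦ Subsingleton.elim _ _⟩

theorem Ideal.smul_eq_zero_of_subsingleton_tensor {R : Type*} [CommRing R] (I : Ideal R)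
    {X : Type*} [AddCommGroup X] [Module R X] [Subsingleton (I ⊗[R] X)] {γ : R} (hγ : γ ∈ I)
    (x : X) : γ • x = 0 := by
  simpa using congrArg (TensorProduct.lift ((LinearMap.lsmul R X).comp I.subtype))
    (Subsingleton.elim ((⟨γ, hγ⟩ : I) ⊗ₜ[R] x) 0)

theorem Ideal.subsingleton_tensor_iff {R : Type*} [CommRing R] {I : Ideal R}
    (hI : IsIdempotentElem I) {X : Type*} [AddCommGroup X] [Module R X] :
    Subsingleton (I ⊗[R] X) ↔ ∀ γ ∈ I, ∀ x : X, γ • x = 0 := by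
  refine ⟨fun _ γ hγ x ↦ I.smul_eq_zero_of_subsingleton_tensor hγ x, fun hIX ↦ ?_⟩
  refine subsingleton_of_forall_eq 0 fun t ↦ ?_
  induction t with
  | zero => rfl
  | add t₁ t₂ h₁ h₂ => rw [h₁, h₂, add_zero]
  | tmul γ x =>
    obtain ⟨γ, hγ⟩ := γ
    rw [← hI.eq] at hγ
    induction hγ using Submodule.mul_induction_on' with
    | mem_mul_mem a ha b hb =>
      have : (⟨a * b, _⟩ : I) = a • (⟨b, hb⟩ : I) := rfl
      rw [this, TensorProduct.smul_tmul, hIX a ha x, TensorProduct.tmul_zero]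
    | add a ha b hb iha ihb =>
      rw [hI.eq] at ha hb
      have : (⟨a + b, _⟩ : I) = ⟨a, ha⟩ + ⟨b, hb⟩ := rfl
      rw [this, TensorProduct.add_tmul, iha, ihb, add_zero]

theorem Ideal.flat_of_forall_finset_exists_dvd {R : Type*} [CommRing R] {I : Ideal R}
    (h : ∀ s : Finset R, ↑s ⊆ (I : Set R) → ∃ a ∈ I, a ∈ nonZeroDivisors R ∧ ∀ x ∈ s, a ∣ x) :
    Module.Flat R I := by
  classical
  refine Module.Flat.of_forall_isTrivialRelation fun {l f x} hfx ↦ ?_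
  obtain ⟨a, haI, ha, hdvd⟩ := h (Finset.univ.image fun i ↦ (x i : R)) (by simp [Set.subset_def])
  choose r hr using fun i ↦ hdvd (x i) (by simp)
  refine ⟨1, fun i _ ↦ r i, fun _ ↦ ⟨a, haI⟩, fun i ↦ ?_, fun _ ↦ ?_⟩
  · ext
    simp [hr i, mul_comm]
  · have : a * ∑ i, f i * r i = 0 := by
      simpa [Finset.mul_sum, hr, mul_left_comm a] using congrArg Subtype.val hfx
    exact (mul_left_mem_nonZeroDivisors_eq_zero_iff ha).mp this

namespace PowerFamily

variable {Λ : AddSubgroup ℝ} {R : Type*} [CommRing R] {π : ℝ → R} {m : Ideal R}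

theorem pi_mem (hm : ∀ x : R, x ∈ m ↔ ∃ ε : ℝ, ε ∈ Λ ∧ 0 < ε ∧ ∃ r : R, x = π ε * r)
    {ε : ℝ} (hε : ε ∈ Λ) (hε0 : 0 < ε) : π ε ∈ m :=
  (hm _).mpr ⟨ε, hε, hε0, 1, (mul_one _).symm⟩

theorem exists_mem_mul_eq_of_lt
    (hππ : ∀ ε δ : ℝ, ε ∈ Λ → δ ∈ Λ → 0 < ε → 0 < δ →
      ∃ u : Rˣ, π ε * π δ = (u : R) * π (ε + δ))
    (hm : ∀ x : R, x ∈ m ↔ ∃ ε : ℝ, ε ∈ Λ ∧ 0 < ε ∧ ∃ r : R, x = π ε * r)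
    {ε δ : ℝ} (hε : ε ∈ Λ) (hδ : δ ∈ Λ) (hδ0 : 0 < δ) (hδε : δ < ε) :
    ∃ c ∈ m, π ε = π δ * c := by
  obtain ⟨u, hu⟩ := hππ δ (ε - δ) hδ (Λ.sub_mem hε hδ) hδ0 (sub_pos.mpr hδε)
  rw [add_sub_cancel] at hu
  refine ⟨π (ε - δ) * ↑u⁻¹, (hm _).mpr ⟨ε - δ, Λ.sub_mem hε hδ, sub_pos.mpr hδε, _, rfl⟩, ?_⟩
  rw [← mul_assoc, hu, mul_comm, ← mul_assoc, Units.inv_mul, one_mul]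

theorem isIdempotentElem_ideal (hΛ : Dense (Λ : Set ℝ))
    (hππ : ∀ ε δ : ℝ, ε ∈ Λ → δ ∈ Λ → 0 < ε → 0 < δ →
      ∃ u : Rˣ, π ε * π δ = (u : R) * π (ε + δ))
    (hm : ∀ x : R, x ∈ m ↔ ∃ ε : ℝ, ε ∈ Λ ∧ 0 < ε ∧ ∃ r : R, x = π ε * r) :
    IsIdempotentElem m := by
  refine le_antisymm Ideal.mul_le_left fun x hx ↦ ?_
  obtain ⟨ε, hε, hε0, r, rfl⟩ := (hm x).mp hx
  obtain ⟨δ, hδ, hδ0, hδε⟩ := hΛ.exists_between hε0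
  obtain ⟨c, hc, hπc⟩ := exists_mem_mul_eq_of_lt hππ hm hε hδ hδ0 hδε
  rw [hπc, mul_assoc]
  exact Ideal.mul_mem_mul (pi_mem hm hδ hδ0) (m.mul_mem_right r hc)

theorem exists_pi_dvd_of_finset_subset (hΛ : Dense (Λ : Set ℝ))
    (hππ : ∀ ε δ : ℝ, ε ∈ Λ → δ ∈ Λ → 0 < ε → 0 < δ →
      ∃ u : Rˣ, π ε * π δ = (u : R) * π (ε + δ))
    (hm : ∀ x : R, x ∈ m ↔ ∃ ε : ℝ, ε ∈ Λ ∧ 0 < ε ∧ ∃ r : R, x = π ε * r)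
    (s : Finset R) (hs : ↑s ⊆ (m : Set R)) : ∃ ε ∈ Λ, 0 < ε ∧ ∀ x ∈ s, π ε ∣ x := by
  classical
  induction s using Finset.induction_on with
  | empty =>
    obtain ⟨ε, hε, hε0, -⟩ := hΛ.exists_between zero_lt_one
    exact ⟨ε, hε, hε0, by simp⟩
  | insert y s _ ih =>
    rw [Finset.coe_insert, Set.insert_subset_iff] at hs
    obtain ⟨ε, hε, hε0, hdvd⟩ := ih hs.2
    obtain ⟨ε', hε', hε'0, r, rfl⟩ := (hm y).mp hs.1
    obtain ⟨δ, hδ, hδ0, hδε⟩ := hΛ.exists_between (lt_min hε0 hε'0)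
    have hπδ : ∀ η ∈ Λ, min ε ε' ≤ η → π δ ∣ π η := fun η hη hle ↦ by
      obtain ⟨c, -, hc⟩ := exists_mem_mul_eq_of_lt hππ hm hη hδ hδ0 (hδε.trans_le hle)
      exact ⟨c, hc⟩
    refine ⟨δ, hδ, hδ0, (Finset.forall_mem_insert _ _ _).mpr ⟨?_, fun x hx ↦ ?_⟩⟩
    · exact (hπδ ε' hε' (min_le_right _ _)).mul_right r
    · exact (hπδ ε hε (min_le_left _ _)).trans (hdvd x hx)

theorem flat_ideal (hΛ : Dense (Λ : Set ℝ))
    (hπ : ∀ ε : ℝ, ε ∈ Λ → 0 < ε → π ε ∈ nonZeroDivisors R)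
    (hππ : ∀ ε δ : ℝ, ε ∈ Λ → δ ∈ Λ → 0 < ε → 0 < δ →
      ∃ u : Rˣ, π ε * π δ = (u : R) * π (ε + δ))
    (hm : ∀ x : R, x ∈ m ↔ ∃ ε : ℝ, ε ∈ Λ ∧ 0 < ε ∧ ∃ r : R, x = π ε * r) :
    Module.Flat R m :=
  Ideal.flat_of_forall_finset_exists_dvd fun s hs ↦
    let ⟨ε, hε, hε0, hdvd⟩ := exists_pi_dvd_of_finset_subset hΛ hππ hm s hs
    ⟨π ε, pi_mem hm hε hε0, hπ ε hε hε0, hdvd⟩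

end PowerFamily

/-- Let `Λ` be a dense additive subgroup of `ℝ`, `R` a commutative ring equipped with
elements `π^ε` (for `ε ∈ Λ`, `ε > 0`) which are non-zero-divisors and satisfy
`π^ε · π^δ = u · π^(ε+δ)` for units `u`, and let `m` be the ideal `⋃ π^ε R`.
A morphism `f : M → N` of `R`-modules is an α-isomorphism (kernel and cokernel annihilated
by every element of `m`) if and only if `id_m ⊗ f : m ⊗_R M → m ⊗_R N` is an isomorphism. -/
theorem statement1
    (Λ : AddSubgroup ℝ) (hΛ : Dense (Λ : Set ℝ))
    {R : Type*} [CommRing R] (π : ℝ → R)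
    (hπ : ∀ ε : ℝ, ε ∈ Λ → 0 < ε → π ε ∈ nonZeroDivisors R)
    (hππ : ∀ ε δ : ℝ, ε ∈ Λ → δ ∈ Λ → 0 < ε → 0 < δ →
      ∃ u : Rˣ, π ε * π δ = (u : R) * π (ε + δ))
    (m : Ideal R)
    (hm : ∀ x : R, x ∈ m ↔ ∃ ε : ℝ, ε ∈ Λ ∧ 0 < ε ∧ ∃ r : R, x = π ε * r)
    {M N : Type*} [AddCommGroup M] [Module R M] [AddCommGroup N] [Module R N]
    (f : M →ₗ[R] N) :
    ((∀ γ ∈ m, ∀ x ∈ LinearMap.ker f, γ • x = 0) ∧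
      (∀ γ ∈ m, ∀ y : N ⧸ LinearMap.range f, γ • y = 0)) ↔
      Function.Bijective (LinearMap.lTensor (↥m) f) := by
  have hidem := PowerFamily.isIdempotentElem_ideal hΛ hππ hm
  have := PowerFamily.flat_ideal hΛ hπ hππ hm
  rw [Function.Bijective, Module.Flat.lTensor_injective_iff_subsingleton m f,
    f.lTensor_surjective_iff_subsingleton m, Ideal.subsingleton_tensor_iff hidem,
    Ideal.subsingleton_tensor_iff hidem]
  simp [Subtype.forall, Subtype.ext_iff]
end

section
/- For every R-module M: (a) the canonical R-linear map M → Hom_R(m, M) sending x to the homomorphism a ↦ a·x is an α-isomorphism; (b) the evaluation map m ⊗_R Hom_R(m, M) → M, a ⊗ φ ↦ φ(a), is an α-isomorphism. -/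
open scoped TensorProduct

/-- With `R`, `m` as in the almost-algebra context: for every `R`-module `M`,
(a) the canonical map `M → Hom_R(m, M)`, `x ↦ (a ↦ a • x)`, is an α-isomorphism, and
(b) the evaluation map `m ⊗_R Hom_R(m, M) → M`, `a ⊗ φ ↦ φ a`, is an α-isomorphism. -/
theorem statement2
    (Λ : AddSubgroup ℝ) (hΛ : Dense (Λ : Set ℝ))
    {R : Type*} [CommRing R] (π : ℝ → R)
    (hπ : ∀ ε : ℝ, ε ∈ Λ → 0 < ε → π ε ∈ nonZeroDivisors R)
    (hππ : ∀ ε δ : ℝ, ε ∈ Λ → δ ∈ Λ → 0 < ε → 0 < δ →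
      ∃ u : Rˣ, π ε * π δ = (u : R) * π (ε + δ))
    (m : Ideal R)
    (hm : ∀ x : R, x ∈ m ↔ ∃ ε : ℝ, ε ∈ Λ ∧ 0 < ε ∧ ∃ r : R, x = π ε * r)
    {M : Type*} [AddCommGroup M] [Module R M]
    (φ : M →ₗ[R] (↥m →ₗ[R] M)) (hφ : ∀ (x : M) (a : ↥m), φ x a = (a : R) • x)
    (ev : (↥m ⊗[R] (↥m →ₗ[R] M)) →ₗ[R] M)
    (hev : ∀ (a : ↥m) (g : ↥m →ₗ[R] M), ev (a ⊗ₜ[R] g) = g a) :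
    ((∀ γ ∈ m, ∀ x ∈ LinearMap.ker φ, γ • x = 0) ∧
      (∀ γ ∈ m, ∀ y : (↥m →ₗ[R] M) ⧸ LinearMap.range φ, γ • y = 0)) ∧
    ((∀ γ ∈ m, ∀ z ∈ LinearMap.ker ev, γ • z = 0) ∧
      (∀ γ ∈ m, ∀ w : M ⧸ LinearMap.range ev, γ • w = 0)) := by
  constructor
  · constructor
    · intro γ hγ x hx
      rw [LinearMap.mem_ker] at hx
      calc γ • x = φ x ⟨γ, hγ⟩ := (hφ x ⟨γ, hγ⟩).symm
        _ = 0 := by rw [hx]; rfl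
    · intro γ hγ y
      obtain ⟨g, rfl⟩ := Submodule.Quotient.mk_surjective _ y
      rw [← Submodule.Quotient.mk_smul, Submodule.Quotient.mk_eq_zero]
      refine ⟨g ⟨γ, hγ⟩, ?_⟩
      ext c
      rw [hφ, ← map_smul]
      have h1 : (c : R) • (⟨γ, hγ⟩ : ↥m) = γ • c := Subtype.ext (mul_comm _ _)
      rw [h1, map_smul]
      rfl
  · have h2 : ∀ (c : ↥m) (g : ↥m →ₗ[R] M), φ (g c) = (c : R) • g := by
      intro c g
      ext d
      rw [hφ, LinearMap.smul_apply, ← map_smul, ← map_smul]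
      congr 1
      exact Subtype.ext (mul_comm _ _)
    constructor
    · intro γ hγ z hz
      rw [LinearMap.mem_ker] at hz
      have key : ∀ w : ↥m ⊗[R] (↥m →ₗ[R] M),
          γ • w = (⟨γ, hγ⟩ : ↥m) ⊗ₜ[R] (φ (ev w)) := by
        intro w
        induction w using TensorProduct.induction_on with
        | zero => simp
        | tmul c g =>
          rw [hev, TensorProduct.smul_tmul']
          have h1 : γ • c = (c : R) • (⟨γ, hγ⟩ : ↥m) := Subtype.ext (mul_comm _ _)
          rw [h1, h2, TensorProduct.smul_tmul]
        | add u v hu hv =>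
          rw [smul_add, hu, hv, map_add, map_add, TensorProduct.tmul_add]
      rw [key z, hz, map_zero, TensorProduct.tmul_zero]
    · intro γ hγ w
      obtain ⟨x, rfl⟩ := Submodule.Quotient.mk_surjective _ w
      rw [← Submodule.Quotient.mk_smul, Submodule.Quotient.mk_eq_zero]
      exact ⟨⟨γ, hγ⟩ ⊗ₜ[R] φ x, by rw [hev, hφ]⟩
end

section
/- Let B be a commutative A-algebra and γ ∈ A. (i) If u : E → F is a γ-isomorphism of A-modules, then the induced map B ⊗_A E → B ⊗_A F is a γ²-isomorphism of B-modules (kernel and cokernel annihilated by the image of γ² in B). (ii) If E → F → G → 0 is a γ-exact sequence of A-modules, then the induced sequence B ⊗_A E → B ⊗_A F → B ⊗_A G → 0 of B-modules is γ²-exact. -/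
open scoped TensorProduct

/-!
Factor a map `v : F → G` with `γ`-dense image as the surjection `v'` onto its range followed
by the inclusion `ι`. Since `γ • id` on `G` factors through the range, `γ` kills the kernel of
`B ⊗ ι`; right exactness of `B ⊗ -` on `ker v → F → range v → 0` then gives `γ • w` in the
image of `B ⊗ ker v` whenever `w` lies in the kernel of `B ⊗ v`. The second factor `γ` comes
from `γ` killing `ker u` in (i), and from `E → ker v` having `γ`-dense image in (ii).
-/

namespace LinearMap

variable {A : Type*} [CommRing A] {B : Type*} [CommRing B] [Algebra A B]
variable {M N P : Type*} [AddCommGroup M] [Module A M] [AddCommGroup N] [Module A N]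
  [AddCommGroup P] [Module A P]

lemma algebraMap_smul_eq_zero_of_forall_smul_eq_zero {γ : A} (h : ∀ m : M, γ • m = 0)
    (z : B ⊗[A] M) : algebraMap A B γ • z = 0 := by
  rw [algebraMap_smul]
  induction z with
  | zero => exact smul_zero γ
  | tmul b m => rw [← TensorProduct.tmul_smul, h, TensorProduct.tmul_zero]
  | add x y hx hy => rw [smul_add, hx, hy, add_zero]

lemma exists_algebraMap_smul_eq_baseChange {γ : A} (f : M →ₗ[A] N)
    (h : ∀ n, ∃ m, γ • n = f m) (w : B ⊗[A] N) :
    ∃ z, algebraMap A B γ • w = baseChange B f z := by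
  induction w with
  | zero => exact ⟨0, by simp⟩
  | tmul b n =>
    obtain ⟨m, hm⟩ := h n
    exact ⟨b ⊗ₜ m, by rw [algebraMap_smul, ← TensorProduct.tmul_smul, hm, baseChange_tmul]⟩
  | add x y hx hy =>
    obtain ⟨z₁, h₁⟩ := hx
    obtain ⟨z₂, h₂⟩ := hy
    exact ⟨z₁ + z₂, by rw [smul_add, h₁, h₂, map_add]⟩

lemma exists_algebraMap_sq_smul_eq_baseChange {γ : A} (f : M →ₗ[A] N)
    (h : ∀ n, ∃ m, γ • n = f m) (w : B ⊗[A] N) :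
    ∃ z, algebraMap A B (γ ^ 2) • w = baseChange B f z := by
  obtain ⟨z, hz⟩ := exists_algebraMap_smul_eq_baseChange f h w
  exact ⟨algebraMap A B γ • z, by rw [pow_two, map_mul, mul_smul, hz, map_smul]⟩

lemma algebraMap_smul_eq_zero_of_baseChange_subtype_eq_zero {γ : A} {R : Submodule A N}
    (hR : ∀ n, γ • n ∈ R) {x : B ⊗[A] R} (hx : baseChange B R.subtype x = 0) :
    algebraMap A B γ • x = 0 := by
  let s : N →ₗ[A] R := (γ • LinearMap.id).codRestrict R hR
  have hs : s ∘ₗ R.subtype = γ • LinearMap.id := by ext; rfl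
  have := congrArg (baseChange B s) hx
  rwa [map_zero, ← comp_apply, ← baseChange_comp, hs, baseChange_smul, baseChange_id,
    smul_apply, id_apply, ← algebraMap_smul B] at this

lemma exists_baseChange_subtype_ker_eq_algebraMap_smul {γ : A} (v : N →ₗ[A] P)
    (hv : ∀ p, ∃ n, γ • p = v n) {w : B ⊗[A] N} (hw : baseChange B v w = 0) :
    ∃ t : B ⊗[A] ker v, baseChange B (ker v).subtype t = algebraMap A B γ • w := by
  have hrange : ∀ p, γ • p ∈ range v := fun p ↦ by
    obtain ⟨n, hn⟩ := hv p
    exact hn ▸ mem_range_self v n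
  have hexact : Function.Exact (ker v).subtype v.rangeRestrict := by
    rw [exact_iff, ker_rangeRestrict, Submodule.range_subtype]
  have hzero : baseChange B v.rangeRestrict (algebraMap A B γ • w) = 0 := by
    rw [map_smul]
    refine algebraMap_smul_eq_zero_of_baseChange_subtype_eq_zero hrange ?_
    rwa [← comp_apply, ← baseChange_comp, subtype_comp_codRestrict]
  rw [baseChange_eq_ltensor] at hzero
  obtain ⟨t, ht⟩ := (lTensor_exact B hexact v.surjective_rangeRestrict _).mp hzero
  exact ⟨t, by rwa [baseChange_eq_ltensor]⟩

end LinearMap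

open LinearMap

/-- Let `B` be a commutative `A`-algebra and `γ ∈ A`.
(i) If `u : E → F` is a `γ`-isomorphism of `A`-modules, then `B ⊗_A E → B ⊗_A F` is a
`γ²`-isomorphism of `B`-modules.
(ii) If `E → F → G → 0` is a `γ`-exact sequence of `A`-modules, then the induced sequence
`B ⊗_A E → B ⊗_A F → B ⊗_A G → 0` of `B`-modules is `γ²`-exact. -/
theorem statement3 {A : Type*} [CommRing A] {B : Type*} [CommRing B] [Algebra A B]
    (γ : A)
    {E F G : Type*} [AddCommGroup E] [Module A E] [AddCommGroup F] [Module A F]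
    [AddCommGroup G] [Module A G] :
    (∀ u : E →ₗ[A] F,
      (∀ x, u x = 0 → γ • x = 0) → (∀ y : F, ∃ x, γ • y = u x) →
      ((∀ z : B ⊗[A] E, LinearMap.baseChange B u z = 0 → algebraMap A B (γ ^ 2) • z = 0) ∧
       (∀ w : B ⊗[A] F, ∃ z, algebraMap A B (γ ^ 2) • w = LinearMap.baseChange B u z))) ∧
    (∀ (u : E →ₗ[A] F) (v : F →ₗ[A] G),
      (∀ x, v (u x) = 0) → (∀ y, v y = 0 → ∃ x, γ • y = u x) →
      (∀ z : G, ∃ y, γ • z = v y) →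
      ((∀ z : B ⊗[A] E, LinearMap.baseChange B v (LinearMap.baseChange B u z) = 0) ∧
       (∀ w : B ⊗[A] F, LinearMap.baseChange B v w = 0 →
          ∃ z, algebraMap A B (γ ^ 2) • w = LinearMap.baseChange B u z) ∧
       (∀ w : B ⊗[A] G, ∃ y, algebraMap A B (γ ^ 2) • w = LinearMap.baseChange B v y))) := by
  refine ⟨fun u hker hcoker ↦ ⟨fun z hz ↦ ?_, exists_algebraMap_sq_smul_eq_baseChange u hcoker⟩,
    fun u v hvu hexact hcoker ↦ ⟨fun z ↦ ?_, fun w hw ↦ ?_,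
      exists_algebraMap_sq_smul_eq_baseChange v hcoker⟩⟩
  · obtain ⟨t, ht⟩ := exists_baseChange_subtype_ker_eq_algebraMap_smul u hcoker hz
    have htγ : algebraMap A B γ • t = 0 :=
      algebraMap_smul_eq_zero_of_forall_smul_eq_zero (fun x ↦ Subtype.ext (hker x x.2)) t
    rw [pow_two, map_mul, mul_smul, ← ht, ← map_smul, htγ, map_zero]
  · have : v ∘ₗ u = 0 := ext hvu
    rw [← comp_apply, ← baseChange_comp, this, baseChange_zero, LinearMap.zero_apply]
  · obtain ⟨t, ht⟩ := exists_baseChange_subtype_ker_eq_algebraMap_smul v hcoker hw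
    obtain ⟨z, hz⟩ := exists_algebraMap_smul_eq_baseChange (B := B)
      (u.codRestrict (ker v) fun x ↦ mem_ker.mpr (hvu x))
      (fun y ↦ (hexact y y.2).imp fun _ hx ↦ Subtype.ext hx) t
    refine ⟨z, ?_⟩
    rw [pow_two, map_mul, mul_smul, ← ht, ← map_smul, hz, ← comp_apply, ← baseChange_comp,
      subtype_comp_codRestrict]
end

section
/- Let γ ∈ A and consider a commutative diagram of A-modules with rows E →u F →v G and E' →u' F' →v' G' and vertical maps e : E → E', f : F → F', g : G → G', such that v ∘ u = 0 and v' ∘ u' = 0, the modules ker(v)/im(u) and coker(v) are annihilated by γ, and the modules ker(u') and ker(v')/im(u') are annihilated by γ. Let u₁ : ker(e) → ker(f) and v₁ : ker(f) → ker(g) be the maps induced by u and v, and u₁' : coker(e) → coker(f) and v₁' : coker(f) → coker(g) the maps induced by u' and v'. Then v₁ ∘ u₁ = 0 and v₁' ∘ u₁' = 0, and the modules ker(v₁)/im(u₁) and ker(v₁')/im(u₁') are annihilated by γ². -/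
/-- Given a commutative diagram of `A`-modules with rows `E → F → G` and `E' → F' → G'`
and vertical maps `e, f, g`, such that both rows are complexes, `γ` annihilates
`ker v / im u` and `coker v`, and `γ` annihilates `ker u'` and `ker v' / im u'`,
then the induced maps on kernels and cokernels form complexes whose homology at the
middle terms is annihilated by `γ²`. -/
theorem statement4 {A : Type*} [CommRing A] (γ : A)
    {E F G E' F' G' : Type*}
    [AddCommGroup E] [Module A E] [AddCommGroup F] [Module A F] [AddCommGroup G] [Module A G]
    [AddCommGroup E'] [Module A E'] [AddCommGroup F'] [Module A F']
    [AddCommGroup G'] [Module A G']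
    (u : E →ₗ[A] F) (v : F →ₗ[A] G) (u' : E' →ₗ[A] F') (v' : F' →ₗ[A] G')
    (e : E →ₗ[A] E') (f : F →ₗ[A] F') (g : G →ₗ[A] G')
    (hcomm₁ : ∀ x, f (u x) = u' (e x)) (hcomm₂ : ∀ y, g (v y) = v' (f y))
    (hvu : ∀ x, v (u x) = 0) (hv'u' : ∀ x', v' (u' x') = 0)
    (hrow₁mid : ∀ y, v y = 0 → ∃ x, γ • y = u x)
    (hrow₁coker : ∀ z : G, ∃ y, γ • z = v y)
    (hrow₂ker : ∀ x' : E', u' x' = 0 → γ • x' = 0)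
    (hrow₂mid : ∀ y', v' y' = 0 → ∃ x', γ • y' = u' x') :
    (∀ x : E, e x = 0 → v (u x) = 0) ∧
    (∀ x' : E', ∃ z : G, v' (u' x') = g z) ∧
    (∀ y : F, f y = 0 → v y = 0 → ∃ x : E, e x = 0 ∧ γ ^ 2 • y = u x) ∧
    (∀ y' : F', (∃ z : G, v' y' = g z) → ∃ (x' : E') (w : F), γ ^ 2 • y' = u' x' + f w) := by
  refine ⟨fun x _ => hvu x, fun x' => ⟨0, by rw [hv'u', map_zero]⟩, ?_, ?_⟩
  · intro y hfy hvy
    obtain ⟨x, hx⟩ := hrow₁mid y hvy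
    refine ⟨γ • x, ?_, ?_⟩
    · rw [map_smul]
      have : u' (e x) = 0 := by
        rw [← hcomm₁, ← hx, map_smul, hfy, smul_zero]
      have := hrow₂ker (e x) this
      simpa using this
    · rw [map_smul, ← hx, pow_two, mul_smul]
  · rintro y' ⟨z, hz⟩
    obtain ⟨y, hy⟩ := hrow₁coker z
    have hv : v' (γ • y' - f y) = 0 := by
      rw [map_sub, map_smul, hz, ← hcomm₂, ← hy, map_smul, sub_self]
    obtain ⟨x', hx'⟩ := hrow₂mid _ hv
    refine ⟨x', γ • y, ?_⟩
    have : γ • (γ • y' - f y) + γ • f y = γ ^ 2 • y' := by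
      rw [smul_sub, sub_add_cancel, pow_two, mul_smul]
    rw [← this, hx', map_smul]
end

section
/- Let λ, γ, γ', γ'' ∈ A and let 0 → F' →i F →p F'' → 0 be a λ-exact sequence of A-modules (p ∘ i = 0, and ker(i), ker(p)/im(i), coker(p) are annihilated by λ). Then: (i) if F is of γ-finite type, then F'' is of (λγ)-finite type; (ii) if F' is of γ'-finite type and F'' is of γ''-finite type, then F is of (λ²γ'γ'')-finite type, and if F' is of γ'-finite presentation and F'' is of γ''-finite presentation, then F is of (λ⁵γ'³γ'')-finite presentation. -/
/-- An `A`-module `F` is of `γ`-finite type if there is an `A`-linear map `A^k → F`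
whose cokernel is annihilated by `γ`. -/
def GammaFiniteType {A : Type*} [CommRing A] (γ : A) (F : Type*) [AddCommGroup F]
    [Module A F] : Prop :=
  ∃ (k : ℕ) (u : (Fin k → A) →ₗ[A] F), ∀ y : F, ∃ x, γ • y = u x

/-- An `A`-module `F` is of `γ`-finite presentation if there is a `γ`-exact sequence
`A^l → A^k → F → 0`. -/
def GammaFinitePresentation {A : Type*} [CommRing A] (γ : A) (F : Type*) [AddCommGroup F]
    [Module A F] : Prop :=
  ∃ (k l : ℕ) (u : (Fin k → A) →ₗ[A] F) (w : (Fin l → A) →ₗ[A] (Fin k → A)),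
    (∀ x, u (w x) = 0) ∧ (∀ x, u x = 0 → ∃ z, γ • x = w z) ∧ (∀ y : F, ∃ x, γ • y = u x)

/-!
Generators of an extension `F` are obtained by lifting generators of `F''` along `p`, which is
possible up to `λ` because `coker p` is killed by `λ`, and adding the images of generators of `F'`
(the horseshoe construction). A relation among the generators of `F''` holds among their lifts
only up to an element of `i(F')`; expressing it, up to `λγ'`, in the generators of `F'` corrects
it to a relation in `F`. Together with the relations of `F'` these generate all relations up to
`λ³γ'²γ''`, a divisor of `λ⁵γ'³γ''`, by a diagram chase.
-/

open LinearMap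

section Annihilated

variable {A M N K : Type*} [CommRing A] [AddCommGroup M] [Module A M] [AddCommGroup N] [Module A N]
  [AddCommGroup K] [Module A K]

theorem exists_smul_eq_apply_of_dvd {γ δ : A} (hγδ : γ ∣ δ) {u : M →ₗ[A] N} {y : N}
    (h : ∃ x, γ • y = u x) : ∃ x, δ • y = u x := by
  obtain ⟨c, rfl⟩ := hγδ
  obtain ⟨x, hx⟩ := h
  exact ⟨c • x, by rw [map_smul, ← hx, mul_comm, mul_smul]⟩

theorem exists_smul_eq_comp_apply {γ δ : A} {u : M →ₗ[A] N} {p : N →ₗ[A] K}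
    (hu : ∀ y, ∃ x, γ • y = u x) (hp : ∀ z, ∃ y, δ • z = p y) (z : K) :
    ∃ x, (δ * γ) • z = (p ∘ₗ u) x := by
  obtain ⟨y, hy⟩ := hp z
  obtain ⟨x, hx⟩ := hu y
  exact ⟨x, by rw [mul_comm, mul_smul, hy, ← map_smul, hx, comp_apply]⟩

theorem exists_apply_eq_smul_of_projective {P : Type*} [AddCommGroup P] [Module A P]
    [Module.Projective A P] (c : A) (q : M →ₗ[A] N) (g : P →ₗ[A] N)
    (h : ∀ x, ∃ m, c • g x = q m) : ∃ v : P →ₗ[A] M, ∀ x, q (v x) = c • g x := by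
  let g' : P →ₗ[A] range q :=
    (c • g).codRestrict (range q) fun x => by
      obtain ⟨m, hm⟩ := h x
      exact ⟨m, hm.symm⟩
  obtain ⟨v, hv⟩ := Module.projective_lifting_property q.rangeRestrict g' q.surjective_rangeRestrict
  exact ⟨v, fun x => congrArg Subtype.val (LinearMap.congr_fun hv x)⟩

end Annihilated

section Transfer

variable {A F : Type*} [CommRing A] [AddCommGroup F] [Module A F]

def finAppendLinearEquiv (A : Type*) [CommRing A] (m n : ℕ) :
    ((Fin m → A) × (Fin n → A)) ≃ₗ[A] (Fin (m + n) → A) :=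
  (LinearEquiv.sumArrowLequivProdArrow _ _ A A).symm ≪≫ₗ
    LinearEquiv.funCongrLeft A A finSumFinEquiv.symm

theorem GammaFinitePresentation.mono {γ δ : A} (hγδ : γ ∣ δ) (h : GammaFinitePresentation γ F) :
    GammaFinitePresentation δ F := by
  obtain ⟨k, l, u, w, huw, hexact, hu⟩ := h
  exact ⟨k, l, u, w, huw, fun x hx => exists_smul_eq_apply_of_dvd hγδ (hexact x hx),
    fun y => exists_smul_eq_apply_of_dvd hγδ (hu y)⟩

theorem GammaFiniteType.of_linearEquiv {γ : A} {P : Type*} [AddCommGroup P] [Module A P]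
    {k : ℕ} (e : P ≃ₗ[A] (Fin k → A)) (u : P →ₗ[A] F) (hu : ∀ y, ∃ x, γ • y = u x) :
    GammaFiniteType γ F := by
  refine ⟨k, u ∘ₗ e.symm, fun y => ?_⟩
  obtain ⟨x, hx⟩ := hu y
  exact ⟨e x, by simp [hx]⟩

theorem GammaFinitePresentation.of_linearEquiv {γ : A} {P Q : Type*} [AddCommGroup P]
    [Module A P] [AddCommGroup Q] [Module A Q] {k l : ℕ} (e : P ≃ₗ[A] (Fin k → A))
    (e' : Q ≃ₗ[A] (Fin l → A)) (u : P →ₗ[A] F) (w : Q →ₗ[A] P) (huw : ∀ z, u (w z) = 0)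
    (hexact : ∀ x, u x = 0 → ∃ z, γ • x = w z) (hu : ∀ y, ∃ x, γ • y = u x) :
    GammaFinitePresentation γ F := by
  refine ⟨k, l, u ∘ₗ e.symm, e ∘ₗ w ∘ₗ e'.symm, fun z => by simp [huw], fun x hx => ?_,
    fun y => ?_⟩
  · obtain ⟨z, hz⟩ := hexact (e.symm x) hx
    exact ⟨e' z, by simp [← hz]⟩
  · obtain ⟨x, hx⟩ := hu y
    exact ⟨e x, by simp [hx]⟩

end Transfer

section Extension

variable {A F' F F'' P' P'' Q' Q'' : Type*} [CommRing A]
  [AddCommGroup F'] [Module A F'] [AddCommGroup F] [Module A F] [AddCommGroup F''] [Module A F'']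
  [AddCommGroup P'] [Module A P'] [AddCommGroup P''] [Module A P'']
  [AddCommGroup Q'] [Module A Q'] [AddCommGroup Q''] [Module A Q'']
  {lam γ' γ'' : A} {i : F' →ₗ[A] F} {p : F →ₗ[A] F''}
  {u' : P' →ₗ[A] F'} {u'' : P'' →ₗ[A] F''} {v : P'' →ₗ[A] F}
  {w' : Q' →ₗ[A] P'} {w'' : Q'' →ₗ[A] P''} {s : Q'' →ₗ[A] P'}

theorem exists_smul_eq_coprod_apply (hmid : ∀ y, p y = 0 → ∃ x, lam • y = i x)
    (hu' : ∀ y, ∃ x, γ' • y = u' x) (hu'' : ∀ z, ∃ x, γ'' • z = u'' x)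
    (hv : ∀ x, p (v x) = lam • u'' x) (y : F) :
    ∃ x, (lam ^ 2 * γ' * γ'') • y = (i ∘ₗ u').coprod v x := by
  obtain ⟨b, hb⟩ := hu'' (p y)
  have hker_p : p ((lam * γ'') • y - v b) = 0 := by
    rw [map_sub, map_smul, hv, mul_smul, hb, sub_self]
  obtain ⟨x', hx'⟩ := hmid _ hker_p
  obtain ⟨a, ha⟩ := hu' x'
  refine ⟨(a, (lam * γ') • b), ?_⟩
  have hi : γ' • lam • ((lam * γ'') • y - v b) = i (u' a) := by
    rw [hx', ← map_smul, ha]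
  rw [coprod_apply, comp_apply, ← hi, map_smul v]
  module

variable (w' w'' s) in
/-- For a relation `r` of `F''`, `v (w'' r)` need not vanish in `F`; it lies in `i(F')` up to `λ`,
and `s r` expresses it in the generators of `F'`, so `(-s r, λγ' • w'' r)` is a relation in `F`. -/
def horseshoeRel (c : A) : Q' × Q'' →ₗ[A] P' × P'' :=
  (w' ∘ₗ fst A Q' Q'' - s ∘ₗ snd A Q' Q'').prod (c • w'' ∘ₗ snd A Q' Q'')

@[simp]
theorem horseshoeRel_apply (c : A) (z : Q' × Q'') :
    horseshoeRel w' w'' s c z = (w' z.1 - s z.2, c • w'' z.2) := rfl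

theorem coprod_horseshoeRel_apply (hw' : ∀ z, u' (w' z) = 0)
    (hs : ∀ z, i (u' (s z)) = (lam * γ') • v (w'' z)) (z : Q' × Q'') :
    (i ∘ₗ u').coprod v (horseshoeRel w' w'' s (lam * γ') z) = 0 := by
  simp only [horseshoeRel_apply, coprod_apply, comp_apply, map_sub, hw', hs, map_smul, map_zero]
  abel

theorem exists_smul_eq_horseshoeRel_of_coprod_apply_eq_zero (hpi : ∀ x, p (i x) = 0)
    (hker : ∀ x, i x = 0 → lam • x = 0) (hv : ∀ x, p (v x) = lam • u'' x)
    (hw' : ∀ x, u' x = 0 → ∃ z, γ' • x = w' z) (hw'' : ∀ x, u'' x = 0 → ∃ z, γ'' • x = w'' z)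
    (hs : ∀ z, i (u' (s z)) = (lam * γ') • v (w'' z)) (x : P' × P'')
    (hx : (i ∘ₗ u').coprod v x = 0) :
    ∃ z, (lam ^ 3 * γ' ^ 2 * γ'') • x = horseshoeRel w' w'' s (lam * γ') z := by
  obtain ⟨a, b⟩ := x
  simp only [coprod_apply, comp_apply] at hx
  rw [add_eq_zero_iff_eq_neg] at hx
  have hb : u'' (lam • b) = 0 := by
    rw [map_smul, ← hv, ← neg_eq_zero, ← map_neg, ← hx, hpi]
  obtain ⟨z'', hz''⟩ := hw'' _ hb
  have hi : i (u' (s z'' + (lam ^ 2 * γ' * γ'') • a)) = 0 := by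
    rw [map_add, map_add, hs, ← hz'', map_smul u', map_smul i, hx, map_smul v, map_smul v]
    module
  have ha : u' (lam • s z'' + (lam ^ 3 * γ' * γ'') • a) = 0 := by
    rw [← hker _ hi, ← map_smul u']
    congr 1
    module
  obtain ⟨z', hz'⟩ := hw' _ ha
  refine ⟨(z', (lam * γ') • z''), Prod.ext ?_ ?_⟩
  · simp only [horseshoeRel_apply, Prod.smul_fst, ← hz', map_smul]
    module
  · simp only [horseshoeRel_apply, Prod.smul_snd, map_smul, ← hz'']
    module

end Extension

section Main

variable {A F' F F'' : Type*} [CommRing A]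
  [AddCommGroup F'] [Module A F'] [AddCommGroup F] [Module A F] [AddCommGroup F''] [Module A F'']
  {lam γ γ' γ'' : A} {i : F' →ₗ[A] F} {p : F →ₗ[A] F''}

theorem GammaFiniteType.of_cokernel_annihilated (h : GammaFiniteType γ F)
    (hcoker : ∀ z : F'', ∃ y, lam • z = p y) : GammaFiniteType (lam * γ) F'' := by
  obtain ⟨k, u, hu⟩ := h
  exact ⟨k, p ∘ₗ u, exists_smul_eq_comp_apply hu hcoker⟩

theorem GammaFiniteType.of_extension (hmid : ∀ y, p y = 0 → ∃ x, lam • y = i x)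
    (hcoker : ∀ z : F'', ∃ y, lam • z = p y) (h' : GammaFiniteType γ' F')
    (h'' : GammaFiniteType γ'' F'') : GammaFiniteType (lam ^ 2 * γ' * γ'') F := by
  obtain ⟨k', u', hu'⟩ := h'
  obtain ⟨k'', u'', hu''⟩ := h''
  obtain ⟨v, hv⟩ := exists_apply_eq_smul_of_projective lam p u'' fun _ => hcoker _
  exact .of_linearEquiv (finAppendLinearEquiv A k' k'') _
    (exists_smul_eq_coprod_apply hmid hu' hu'' hv)

theorem GammaFinitePresentation.of_extension (hpi : ∀ x, p (i x) = 0)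
    (hker : ∀ x, i x = 0 → lam • x = 0) (hmid : ∀ y, p y = 0 → ∃ x, lam • y = i x)
    (hcoker : ∀ z : F'', ∃ y, lam • z = p y) (h' : GammaFinitePresentation γ' F')
    (h'' : GammaFinitePresentation γ'' F'') :
    GammaFinitePresentation (lam ^ 3 * γ' ^ 2 * γ'') F := by
  obtain ⟨k', l', u', w', huw', hw', hu'⟩ := h'
  obtain ⟨k'', l'', u'', w'', huw'', hw'', hu''⟩ := h''
  obtain ⟨v, hv⟩ := exists_apply_eq_smul_of_projective lam p u'' fun _ => hcoker _
  obtain ⟨t, ht⟩ := exists_apply_eq_smul_of_projective lam i (v ∘ₗ w'') fun z =>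
    hmid _ (by rw [comp_apply, hv, huw'', smul_zero])
  obtain ⟨s, hs⟩ := exists_apply_eq_smul_of_projective γ' u' t fun _ => hu' _
  have his : ∀ z, i (u' (s z)) = (lam * γ') • v (w'' z) := fun z => by
    rw [hs, map_smul, ht, comp_apply, smul_smul, mul_comm]
  exact .of_linearEquiv (finAppendLinearEquiv A k' k'') (finAppendLinearEquiv A l' l'') _ _
    (coprod_horseshoeRel_apply huw' his)
    (exists_smul_eq_horseshoeRel_of_coprod_apply_eq_zero hpi hker hv hw' hw'' his)
    fun y => exists_smul_eq_apply_of_dvd ⟨lam * γ', by ring⟩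
      (exists_smul_eq_coprod_apply hmid hu' hu'' hv y)

end Main

/-- Let `0 → F' → F → F'' → 0` be a `λ`-exact sequence of `A`-modules. Then:
(i) if `F` is of `γ`-finite type, `F''` is of `(λγ)`-finite type;
(ii) if `F'` is of `γ'`-finite type and `F''` of `γ''`-finite type, `F` is of
`(λ²γ'γ'')`-finite type; and if `F'` is of `γ'`-finite presentation and `F''` of
`γ''`-finite presentation, `F` is of `(λ⁵γ'³γ'')`-finite presentation. -/
theorem statement5 {A : Type*} [CommRing A] (lam γ γ' γ'' : A)
    {F' F F'' : Type*} [AddCommGroup F'] [Module A F'] [AddCommGroup F] [Module A F]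
    [AddCommGroup F''] [Module A F'']
    (i : F' →ₗ[A] F) (p : F →ₗ[A] F'')
    (hpi : ∀ x, p (i x) = 0)
    (hker : ∀ x, i x = 0 → lam • x = 0)
    (hmid : ∀ y, p y = 0 → ∃ x, lam • y = i x)
    (hcoker : ∀ z : F'', ∃ y, lam • z = p y) :
    (GammaFiniteType γ F → GammaFiniteType (lam * γ) F'') ∧
    (GammaFiniteType γ' F' → GammaFiniteType γ'' F'' →
      GammaFiniteType (lam ^ 2 * γ' * γ'') F) ∧
    (GammaFinitePresentation γ' F' → GammaFinitePresentation γ'' F'' →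
      GammaFinitePresentation (lam ^ 5 * γ' ^ 3 * γ'') F) :=
  ⟨fun h => h.of_cokernel_annihilated hcoker,
    fun h' h'' => .of_extension hmid hcoker h' h'',
    fun h' h'' => (GammaFinitePresentation.of_extension hpi hker hmid hcoker h' h'').mono
      ⟨lam ^ 2 * γ', by ring⟩⟩
end

section
/- Let λ, γ, γ', γ'' ∈ A and let 0 → F' →i F →p F'' → 0 be a λ-exact sequence of A-modules (p ∘ i = 0, and ker(i), ker(p)/im(i), coker(p) are annihilated by λ). Then: (iii) if F is of γ-finite type and F'' is of γ''-finite presentation, then F' is of (λ⁸γγ''⁴)-finite type; (iv) if F is of γ-finite presentation and F' is of γ'-finite type, then F'' is of (λγ³γ')-finite presentation. -/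
section Helpers

variable {A : Type*} [CommRing A] {M : Type*} [AddCommGroup M] [Module A M]

/-- Linear map out of `A^k` defined by images of the standard basis. -/
noncomputable def mkL {k : ℕ} (f : Fin k → M) : (Fin k → A) →ₗ[A] M :=
  (Pi.basisFun A (Fin k)).constr A f

lemma mkL_single {k : ℕ} (f : Fin k → M) (j : Fin k) :
    mkL f (Pi.single j (1 : A)) = f j := by
  have := (Pi.basisFun A (Fin k)).constr_basis A f j
  rwa [Pi.basisFun_apply] at this

lemma extL {k : ℕ} {f g : (Fin k → A) →ₗ[A] M}
    (h : ∀ j, f (Pi.single j 1) = g (Pi.single j 1)) : f = g :=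
  (Pi.basisFun A (Fin k)).ext fun j => by rw [Pi.basisFun_apply]; exact h j

lemma extL' {k : ℕ} {f g : (Fin k → A) →ₗ[A] M}
    (h : ∀ j, f (Pi.single j 1) = g (Pi.single j 1)) (x : Fin k → A) : f x = g x :=
  DFunLike.congr_fun (extL h) x

end Helpers

/-- Let `0 → F' → F → F'' → 0` be a `λ`-exact sequence of `A`-modules. Then:
(iii) if `F` is of `γ`-finite type and `F''` of `γ''`-finite presentation, `F'` is of
`(λ⁸γγ''⁴)`-finite type;
(iv) if `F` is of `γ`-finite presentation and `F'` of `γ'`-finite type, `F''` is of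
`(λγ³γ')`-finite presentation. -/
theorem statement6 {A : Type*} [CommRing A] (lam γ γ' γ'' : A)
    {F' F F'' : Type*} [AddCommGroup F'] [Module A F'] [AddCommGroup F] [Module A F]
    [AddCommGroup F''] [Module A F'']
    (i : F' →ₗ[A] F) (p : F →ₗ[A] F'')
    (hpi : ∀ x, p (i x) = 0)
    (hker : ∀ x, i x = 0 → lam • x = 0)
    (hmid : ∀ y, p y = 0 → ∃ x, lam • y = i x)
    (hcoker : ∀ z : F'', ∃ y, lam • z = p y) :
    (GammaFiniteType γ F → GammaFinitePresentation γ'' F'' →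
      GammaFiniteType (lam ^ 8 * γ * γ'' ^ 4) F') ∧
    (GammaFinitePresentation γ F → GammaFiniteType γ' F' →
      GammaFinitePresentation (lam * γ ^ 3 * γ') F'') := by
  constructor
  · -- part (iii)
    rintro ⟨k, u, hu⟩ ⟨m, n, v, w, hvw, hvker, hvsur⟩
    classical
    -- C : A^k → A^m with γ'' • p (u x) = v (C x)
    choose c hc using fun j : Fin k => hvsur (p (u (Pi.single j 1)))
    set C : (Fin k → A) →ₗ[A] (Fin m → A) := mkL c with hCdef
    have hC : ∀ x, γ'' • p (u x) = v (C x) := by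
      intro x
      have := extL' (f := γ'' • (p ∘ₗ u)) (g := v ∘ₗ C)
        (fun j => by
          simp only [LinearMap.smul_apply, LinearMap.comp_apply, hCdef, mkL_single]
          exact hc j) x
      simpa using this
    -- s : A^m → F with lam • v y = p (s y)
    choose sf hsf using fun t : Fin m => hcoker (v (Pi.single t 1))
    set s : (Fin m → A) →ₗ[A] F := mkL sf with hsdef
    have hs : ∀ y, lam • v y = p (s y) := by
      intro y
      have := extL' (f := lam • v) (g := p ∘ₗ s)
        (fun t => by
          simp only [LinearMap.smul_apply, LinearMap.comp_apply, hsdef, mkL_single]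
          exact hsf t) y
      simpa using this
    -- T : A^n → F' with lam • s (w y) = i (T y)
    have hpsw : ∀ y, p (s (w y)) = 0 := fun y => by
      rw [← hs, hvw, smul_zero]
    choose tf htf using fun r : Fin n => hmid (s (w (Pi.single r 1))) (hpsw _)
    set T : (Fin n → A) →ₗ[A] F' := mkL tf with hTdef
    have hT : ∀ y, lam • s (w y) = i (T y) := by
      intro y
      have := extL' (f := lam • (s ∘ₗ w)) (g := i ∘ₗ T)
        (fun r => by
          simp only [LinearMap.smul_apply, LinearMap.comp_apply, hTdef, mkL_single]
          exact htf r) y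
      simpa using this
    -- D : A^k → F' with lam • ((lam*γ'') • u x - s (C x)) = i (D x)
    set E : (Fin k → A) →ₗ[A] F := (lam * γ'') • u - s ∘ₗ C with hEdef
    have hEval : ∀ x, E x = (lam * γ'') • u x - s (C x) := fun x => by
      simp [hEdef]
    have hpE : ∀ x, p (E x) = 0 := fun x => by
      rw [hEval, map_sub, map_smul, ← hs, ← hC, smul_smul, sub_self]
    choose df hdf using fun j : Fin k => hmid (E (Pi.single j 1)) (hpE _)
    set D : (Fin k → A) →ₗ[A] F' := mkL df with hDdef
    have hD : ∀ x, lam • E x = i (D x) := by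
      intro x
      have := extL' (f := lam • E) (g := i ∘ₗ D)
        (fun j => by
          simp only [LinearMap.smul_apply, LinearMap.comp_apply, hDdef, mkL_single]
          exact hdf j) x
      simpa using this
    -- the generating map for F'
    set U : (Fin (n + k) → A) →ₗ[A] F' :=
      (lam • T) ∘ₗ LinearMap.funLeft A A (Fin.castAdd k) +
        ((lam * γ'') • D) ∘ₗ LinearMap.funLeft A A (Fin.natAdd n) with hUdef
    have hUapp : ∀ (z : Fin n → A) (a : Fin k → A),
        U (Fin.append z a) = lam • T z + (lam * γ'') • D a := by
      intro z a
      have h1 : (LinearMap.funLeft A A (Fin.castAdd k)) (Fin.append z a) = z :=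
        funext fun r => Fin.append_left _ _ r
      have h2 : (LinearMap.funLeft A A (Fin.natAdd n)) (Fin.append z a) = a :=
        funext fun r => Fin.append_right _ _ r
      simp [hUdef, h1, h2]
    refine ⟨n + k, U, fun x' => ?_⟩
    obtain ⟨a, ha⟩ := hu (i x')
    have hpua : p (u a) = 0 := by rw [← ha, map_smul, hpi, smul_zero]
    have hvCa : v (C a) = 0 := by rw [← hC, hpua, smul_zero]
    obtain ⟨z, hz⟩ := hvker (C a) hvCa
    have e1 : i (T z) = (lam * γ'') • s (C a) := by
      rw [← hT z, ← hz, map_smul, smul_smul]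
    have e2 : i (D a) = lam • ((lam * γ'') • u a - s (C a)) := by
      rw [← hD a, hEval]
    have h0 : i ((lam ^ 2 * γ * γ'' ^ 2) • x' - T z - γ'' • D a) = 0 := by
      rw [map_sub, map_sub, map_smul, map_smul, e1, e2]
      have e3 : u a = γ • i x' := ha.symm
      rw [e3]
      module
    have h1 := hker _ h0
    have key : (lam ^ 3 * γ * γ'' ^ 2) • x' = lam • T z + (lam * γ'') • D a := by
      have h2 : (lam ^ 3 * γ * γ'' ^ 2) • x' - (lam • T z + (lam * γ'') • D a) =
          lam • ((lam ^ 2 * γ * γ'' ^ 2) • x' - T z - γ'' • D a) := by module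
      have h3 := h2.trans h1
      exact sub_eq_zero.mp h3
    refine ⟨(lam ^ 5 * γ'' ^ 2) • Fin.append z a, ?_⟩
    rw [map_smul, hUapp, ← key, smul_smul]
    module
  · -- part (iv)
    rintro ⟨k, l, u, w, huw, hkeru, hsuru⟩ ⟨k', u', hsur'⟩
    classical
    choose bf hbf using fun j : Fin k' => hsuru (i (u' (Pi.single j 1)))
    set B : (Fin k' → A) →ₗ[A] (Fin k → A) := mkL bf with hBdef
    have hB : ∀ a, γ • i (u' a) = u (B a) := by
      intro a
      have := extL' (f := γ • (i ∘ₗ u')) (g := u ∘ₗ B)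
        (fun j => by
          simp only [LinearMap.smul_apply, LinearMap.comp_apply, hBdef, mkL_single]
          exact hbf j) a
      simpa using this
    set W : (Fin (l + k') → A) →ₗ[A] (Fin k → A) :=
      w ∘ₗ LinearMap.funLeft A A (Fin.castAdd k') +
        B ∘ₗ LinearMap.funLeft A A (Fin.natAdd l) with hWdef
    have hWapp : ∀ (z : Fin l → A) (a : Fin k' → A),
        W (Fin.append z a) = w z + B a := by
      intro z a
      have h1 : (LinearMap.funLeft A A (Fin.castAdd k')) (Fin.append z a) = z :=
        funext fun r => Fin.append_left _ _ r
      have h2 : (LinearMap.funLeft A A (Fin.natAdd l)) (Fin.append z a) = a :=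
        funext fun r => Fin.append_right _ _ r
      simp [hWdef, h1, h2]
    have hpub : ∀ a, p (u (B a)) = 0 := fun a => by
      rw [← hB, map_smul, hpi, smul_zero]
    refine ⟨k, l + k', p ∘ₗ u, W, ?_, ?_, ?_⟩
    · intro x
      have : W x = w ((LinearMap.funLeft A A (Fin.castAdd k')) x) +
          B ((LinearMap.funLeft A A (Fin.natAdd l)) x) := by simp [hWdef]
      rw [LinearMap.comp_apply, this, map_add, map_add, huw, map_zero, hpub, add_zero]
    · intro x hx
      rw [LinearMap.comp_apply] at hx
      obtain ⟨x', hx'⟩ := hmid (u x) hx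
      obtain ⟨a, ha⟩ := hsur' x'
      have h4 : u ((lam * γ * γ') • x - B a) = 0 := by
        rw [map_sub, map_smul, ← hB, ← ha, map_smul, ← hx']
        module
      obtain ⟨z0, hz0⟩ := hkeru _ h4
      refine ⟨Fin.append (γ • z0) ((γ ^ 2) • a), ?_⟩
      rw [hWapp, map_smul, map_smul, ← hz0]
      module
    · intro y''
      obtain ⟨y, hy⟩ := hcoker y''
      obtain ⟨x, hx⟩ := hsuru y
      refine ⟨(γ ^ 2 * γ') • x, ?_⟩
      rw [LinearMap.comp_apply, map_smul, map_smul, ← hx, map_smul, ← hy]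
      module
end

section
/- Let 0 → F' → F → F'' → 0 be an α-exact sequence of A-modules. If two of the three modules F', F, F'' are α-coherent, then so is the third. -/
/-- Given a commutative ring `R` with an ideal `m` (the almost-algebra context) and an
`R`-algebra `A`, an `A`-module `F` is of α-finite type if for every `γ ∈ m` there is an
`A`-linear map `A^k → F` whose cokernel is annihilated by (the image of) `γ`. -/
def AlphaFiniteType (R : Type*) [CommRing R] (m : Ideal R) (A : Type*) [CommRing A]
    [Algebra R A] (F : Type*) [AddCommGroup F] [Module A F] : Prop :=
  ∀ γ ∈ m, ∃ (k : ℕ) (u : (Fin k → A) →ₗ[A] F), ∀ y : F, ∃ x, algebraMap R A γ • y = u x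

/-- An `A`-module `F` is α-coherent if it is of α-finite type and the kernel of every
`A`-linear map `A^k → F` is of α-finite type. -/
def AlphaCoherent (R : Type*) [CommRing R] (m : Ideal R) (A : Type*) [CommRing A]
    [Algebra R A] (F : Type*) [AddCommGroup F] [Module A F] : Prop :=
  AlphaFiniteType R m A F ∧
    ∀ (k : ℕ) (u : (Fin k → A) →ₗ[A] F), AlphaFiniteType R m A ↥(LinearMap.ker u)

section MkMap

variable {A : Type*} [CommRing A] {F G : Type*} [AddCommGroup F] [Module A F]
  [AddCommGroup G] [Module A G]

/-- The linear map `A^k → F` sending the `j`-th standard basis vector to `y j`. -/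
def mkMap {k : ℕ} (y : Fin k → F) : (Fin k → A) →ₗ[A] F where
  toFun x := ∑ j, x j • y j
  map_add' a b := by simp [add_smul, Finset.sum_add_distrib]
  map_smul' c a := by simp [Finset.smul_sum, mul_smul]

lemma mkMap_apply {k : ℕ} (y : Fin k → F) (x : Fin k → A) :
    mkMap y x = ∑ j, x j • y j := rfl

lemma apply_eq_sum {k : ℕ} (u : (Fin k → A) →ₗ[A] F) (x : Fin k → A) :
    u x = ∑ j, x j • u (Pi.single j 1) := by
  conv_lhs => rw [← Finset.univ_sum_single x]
  rw [map_sum]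
  congr 1; funext j
  have : (Pi.single j (x j) : Fin k → A) = x j • (Pi.single j 1 : Fin k → A) := by
    rw [← Pi.single_smul, smul_eq_mul, mul_one]
  rw [this, map_smul]

lemma mkMap_singles {k : ℕ} (u : (Fin k → A) →ₗ[A] F) (x : Fin k → A) :
    mkMap (fun j => u (Pi.single j 1)) x = u x := (apply_eq_sum u x).symm

lemma mkMap_comp {k : ℕ} (p : F →ₗ[A] G) (y : Fin k → F) (x : Fin k → A) :
    p (mkMap y x) = mkMap (fun j => p (y j)) x := by
  simp [mkMap_apply, map_sum, map_smul]

lemma mkMap_smul {k : ℕ} (c : A) (y : Fin k → F) (x : Fin k → A) :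
    mkMap (fun j => c • y j) x = c • mkMap y x := by
  simp [mkMap_apply, Finset.smul_sum, smul_comm c]

lemma mkMap_lift {k : ℕ} (p : F →ₗ[A] G) (u : (Fin k → A) →ₗ[A] G) (c : A)
    (y : Fin k → F) (hy : ∀ j, p (y j) = c • u (Pi.single j 1)) (x : Fin k → A) :
    p (mkMap y x) = c • u x := by
  rw [mkMap_comp]
  simp only [hy]
  rw [mkMap_smul, mkMap_singles]

lemma mkMap_append {k l : ℕ} (y : Fin k → F) (y' : Fin l → F) (x : Fin k → A)
    (t : Fin l → A) :
    mkMap (Fin.append y y') (Fin.append x t) = mkMap y x + mkMap y' t := by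
  rw [mkMap_apply, mkMap_apply, mkMap_apply, Fin.sum_univ_add]
  simp [Fin.append_left, Fin.append_right]

lemma mkMap_append_apply {k l : ℕ} (y : Fin k → F) (w : (Fin l → A) →ₗ[A] F)
    (x : Fin k → A) (t : Fin l → A) :
    mkMap (Fin.append y fun j => w (Pi.single j 1)) (Fin.append x t)
      = mkMap y x + w t := by
  rw [mkMap_append, mkMap_singles]

lemma append_parts {k l : ℕ} (z : Fin (k + l) → A) :
    Fin.append (fun j => z (Fin.castAdd l j)) (fun j => z (Fin.natAdd k j)) = z := by
  funext j
  refine Fin.addCases (fun j => ?_) (fun j => ?_) j <;>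
    simp [Fin.append_left, Fin.append_right]

lemma funLeft_append {k l : ℕ} (x : Fin k → A) (t : Fin l → A) :
    LinearMap.funLeft A A (Fin.castAdd l) (Fin.append x t) = x := by
  funext j
  simp [LinearMap.funLeft_apply, Fin.append_left]

end MkMap

section AFTHelpers

variable {R : Type*} [CommRing R] {m : Ideal R} {A : Type*} [CommRing A] [Algebra R A]
variable {F G : Type*} [AddCommGroup F] [Module A F] [AddCommGroup G] [Module A G]

lemma aft_of_almost_surj
    (hfac : ∀ γ ∈ m, ∃ a ∈ m, ∃ b ∈ m, γ = a * b)
    (f : F →ₗ[A] G) (hF : AlphaFiniteType R m A F)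
    (hsurj : ∀ γ ∈ m, ∀ z : G, ∃ y, algebraMap R A γ • z = f y) :
    AlphaFiniteType R m A G := by
  intro γ hγ
  obtain ⟨a, ha, b, hb, rfl⟩ := hfac γ hγ
  obtain ⟨k, u, hu⟩ := hF a ha
  refine ⟨k, f ∘ₗ u, fun z => ?_⟩
  obtain ⟨y, hy⟩ := hsurj b hb z
  obtain ⟨x, hx⟩ := hu y
  refine ⟨x, ?_⟩
  rw [map_mul, mul_smul, hy, ← map_smul, hx, LinearMap.comp_apply]

lemma aft_ker_transfer {X : Type*} [AddCommGroup X] [Module A X]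
    (hfac : ∀ γ ∈ m, ∃ a ∈ m, ∃ b ∈ m, γ = a * b)
    (N P : Submodule A X) (hNP : N ≤ P)
    (hPN : ∀ γ ∈ m, ∀ x ∈ P, algebraMap R A γ • x ∈ N)
    (hP : AlphaFiniteType R m A ↥P) : AlphaFiniteType R m A ↥N := by
  intro γ hγ
  obtain ⟨a, ha, b, hb, rfl⟩ := hfac γ hγ
  obtain ⟨k, s, hs⟩ := hP b hb
  refine ⟨k, LinearMap.codRestrict N ((algebraMap R A a) • (P.subtype ∘ₗ s))
    (fun z => hPN a ha _ (s z).2), fun y => ?_⟩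
  obtain ⟨x, hx⟩ := hs ⟨↑y, hNP y.2⟩
  refine ⟨x, Subtype.ext ?_⟩
  have hcoe : (↑(s x) : X) = algebraMap R A b • ↑y := by
    rw [← hx]; rfl
  simp only [LinearMap.codRestrict_apply, LinearMap.smul_apply, LinearMap.comp_apply,
    Submodule.coe_subtype, hcoe, Submodule.coe_smul, smul_smul, map_mul]

end AFTHelpers

/-- Let `0 → F' → F → F'' → 0` be an α-exact sequence of `A`-modules.  If two of the
three modules are α-coherent, then so is the third. -/
theorem statement7
    (Λ : AddSubgroup ℝ) (hΛ : Dense (Λ : Set ℝ))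
    {R : Type*} [CommRing R] (π : ℝ → R)
    (hπ : ∀ ε : ℝ, ε ∈ Λ → 0 < ε → π ε ∈ nonZeroDivisors R)
    (hππ : ∀ ε δ : ℝ, ε ∈ Λ → δ ∈ Λ → 0 < ε → 0 < δ →
      ∃ u : Rˣ, π ε * π δ = (u : R) * π (ε + δ))
    (m : Ideal R)
    (hm : ∀ x : R, x ∈ m ↔ ∃ ε : ℝ, ε ∈ Λ ∧ 0 < ε ∧ ∃ r : R, x = π ε * r)
    {A : Type*} [CommRing A] [Algebra R A]
    {F' F F'' : Type*} [AddCommGroup F'] [Module A F'] [AddCommGroup F] [Module A F]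
    [AddCommGroup F''] [Module A F'']
    (i : F' →ₗ[A] F) (p : F →ₗ[A] F'')
    (hpi : ∀ x, p (i x) = 0)
    (hker : ∀ γ ∈ m, ∀ x, i x = 0 → algebraMap R A γ • x = 0)
    (hmid : ∀ γ ∈ m, ∀ y, p y = 0 → ∃ x, algebraMap R A γ • y = i x)
    (hcoker : ∀ γ ∈ m, ∀ z : F'', ∃ y, algebraMap R A γ • z = p y) :
    (AlphaCoherent R m A F' → AlphaCoherent R m A F → AlphaCoherent R m A F'') ∧
    (AlphaCoherent R m A F' → AlphaCoherent R m A F'' → AlphaCoherent R m A F) ∧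
    (AlphaCoherent R m A F → AlphaCoherent R m A F'' → AlphaCoherent R m A F') := by
  have hfac2 : ∀ γ ∈ m, ∃ a ∈ m, ∃ b ∈ m, γ = a * b := by
    intro γ hγ
    obtain ⟨ε, hεΛ, hε, r, rfl⟩ := (hm γ).1 hγ
    obtain ⟨δ, hδΛ, hδ⟩ := hΛ.exists_between hε
    obtain ⟨u, hu⟩ := hππ δ (ε - δ) hδΛ (Λ.sub_mem hεΛ hδΛ) hδ.1 (sub_pos.2 hδ.2)
    rw [show δ + (ε - δ) = ε by ring] at hu
    refine ⟨π δ, ?_, ↑u⁻¹ * π (ε - δ) * r, ?_, ?_⟩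
    · exact (hm _).2 ⟨δ, hδΛ, hδ.1, 1, (mul_one _).symm⟩
    · exact (hm _).2 ⟨ε - δ, Λ.sub_mem hεΛ hδΛ, sub_pos.2 hδ.2, ↑u⁻¹ * r, by ring⟩
    · have h2 : (↑u⁻¹ : R) * (↑u * π ε) = π ε := by
        rw [← mul_assoc, Units.inv_mul, one_mul]
      calc π ε * r = ↑u⁻¹ * (↑u * π ε) * r := by rw [h2]
        _ = ↑u⁻¹ * (π δ * π (ε - δ)) * r := by rw [← hu]
        _ = π δ * (↑u⁻¹ * π (ε - δ) * r) := by ring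
  have hfac4 : ∀ γ ∈ m, ∃ a ∈ m, ∃ b ∈ m, ∃ c ∈ m, ∃ d ∈ m, γ = a * b * c * d := by
    intro γ hγ
    obtain ⟨x, hx, y, hy, rfl⟩ := hfac2 γ hγ
    obtain ⟨a, ha, b, hb, rfl⟩ := hfac2 x hx
    obtain ⟨c, hc, d, hd, rfl⟩ := hfac2 y hy
    exact ⟨a, ha, b, hb, c, hc, d, hd, by ring⟩
  refine ⟨?_, ?_, ?_⟩
  · -- F' and F coherent ⇒ F'' coherent
    rintro hF' hF
    refine ⟨aft_of_almost_surj hfac2 p hF.1 hcoker, ?_⟩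
    intro k u γ hγ
    obtain ⟨a, ha, b, hb, c, hc, d, hd, rfl⟩ := hfac4 _ hγ
    choose y hy using fun j : Fin k => hcoker a ha (u (Pi.single j 1))
    obtain ⟨l, w', hw'⟩ := hF'.1 c hc
    set V : (Fin (k + l) → A) →ₗ[A] F :=
      mkMap (Fin.append y fun j => (i ∘ₗ w') (Pi.single j 1)) with hVdef
    have hVapp : ∀ (x : Fin k → A) (t : Fin l → A),
        V (Fin.append x t) = mkMap y x + (i ∘ₗ w') t :=
      fun x t => mkMap_append_apply y (i ∘ₗ w') x t
    have hpv : ∀ x : Fin k → A, p (mkMap y x) = algebraMap R A a • u x :=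
      fun x => mkMap_lift p u _ y (fun j => (hy j).symm) x
    obtain ⟨n, s, hs⟩ := hF.2 (k + l) V d hd
    have hmem : ∀ z : Fin n → A,
        ((algebraMap R A a) • (LinearMap.funLeft A A (Fin.castAdd l) ∘ₗ
          (LinearMap.ker V).subtype ∘ₗ s)) z ∈ LinearMap.ker u := by
      intro z
      simp only [LinearMap.smul_apply, LinearMap.comp_apply, Submodule.coe_subtype,
        LinearMap.mem_ker, map_smul]
      have hZ : V (↑(s z)) = 0 := (s z).2
      rw [← append_parts (↑(s z) : Fin (k + l) → A), hVapp] at hZ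
      have h0 : p (mkMap y fun j => (↑(s z) : Fin (k + l) → A) (Fin.castAdd l j)) = 0 := by
        have h1 := congrArg p hZ
        simp only [map_add, LinearMap.comp_apply, hpi, add_zero, map_zero] at h1
        exact h1
      rw [← hpv]
      have : LinearMap.funLeft A A (Fin.castAdd l) (↑(s z) : Fin (k + l) → A)
          = fun j => (↑(s z) : Fin (k + l) → A) (Fin.castAdd l j) := rfl
      rw [this, h0]
    refine ⟨n, LinearMap.codRestrict (LinearMap.ker u)
      ((algebraMap R A a) • (LinearMap.funLeft A A (Fin.castAdd l) ∘ₗ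
        (LinearMap.ker V).subtype ∘ₗ s)) hmem, fun x => ?_⟩
    have hx : u ↑x = 0 := x.2
    have h0 : p (mkMap (A := A) y (↑x : Fin k → A)) = 0 := by rw [hpv, hx, smul_zero]
    obtain ⟨x', hx'⟩ := hmid b hb _ h0
    obtain ⟨t, ht⟩ := hw' x'
    have hz0 : V (Fin.append (algebraMap R A c • algebraMap R A b • (↑x : Fin k → A))
        (-t)) = 0 := by
      rw [hVapp]
      have e1 : mkMap (A := A) y (algebraMap R A c • algebraMap R A b • (↑x : Fin k → A))
          = algebraMap R A c • (algebraMap R A b • mkMap (A := A) y (↑x : Fin k → A)) := by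
        rw [map_smul, map_smul]
      rw [e1, hx', LinearMap.comp_apply, map_neg, map_neg, ← map_smul i, ht]
      exact add_neg_cancel _
    obtain ⟨e, he⟩ := hs ⟨_, hz0⟩
    refine ⟨e, Subtype.ext ?_⟩
    have hcoe : (↑(s e) : Fin (k + l) → A) = algebraMap R A d •
        Fin.append (algebraMap R A c • algebraMap R A b • (↑x : Fin k → A)) (-t) := by
      rw [← he]; rfl
    simp only [LinearMap.codRestrict_apply, LinearMap.smul_apply, LinearMap.comp_apply,
      Submodule.coe_subtype, SetLike.val_smul, hcoe, map_smul, funLeft_append]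
    rw [map_mul, map_mul, map_mul]
    module
  · -- F' and F'' coherent ⇒ F coherent
    rintro hF' hF''
    constructor
    · intro γ hγ
      obtain ⟨a, ha, b, hb, c, hc, d, hd, rfl⟩ := hfac4 γ hγ
      obtain ⟨k, u'', hu''⟩ := hF''.1 a ha
      choose y hy using fun j : Fin k => hcoker b hb (u'' (Pi.single j 1))
      obtain ⟨l, w', hw'⟩ := hF'.1 c hc
      refine ⟨k + l, mkMap (Fin.append y fun j => (i ∘ₗ w') (Pi.single j 1)),
        fun y₀ => ?_⟩
      have hpv : ∀ x : Fin k → A, p (mkMap y x) = algebraMap R A b • u'' x :=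
        fun x => mkMap_lift p u'' _ y (fun j => (hy j).symm) x
      obtain ⟨x, hx⟩ := hu'' (p y₀)
      have h1 : p (algebraMap R A b • algebraMap R A a • y₀ - mkMap y x) = 0 := by
        rw [map_sub, map_smul, map_smul, hx, hpv, sub_self]
      obtain ⟨x', hx'⟩ := hmid d hd _ h1
      obtain ⟨t, ht⟩ := hw' x'
      refine ⟨Fin.append (algebraMap R A c • algebraMap R A d • x) t, ?_⟩
      rw [mkMap_append_apply]
      have e1 : mkMap (A := A) y (algebraMap R A c • algebraMap R A d • x)
          = algebraMap R A c • algebraMap R A d • mkMap y x := by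
        rw [map_smul, map_smul]
      have e2 : (i ∘ₗ w') t = algebraMap R A c • (algebraMap R A d •
          (algebraMap R A b • algebraMap R A a • y₀ - mkMap y x)) := by
        rw [LinearMap.comp_apply, ← ht, map_smul, ← hx']
      rw [e1, e2, map_mul, map_mul, map_mul]
      module
    · intro k u γ hγ
      obtain ⟨a, ha, b, hb, c, hc, d, hd, rfl⟩ := hfac4 γ hγ
      obtain ⟨n, s, hs⟩ := hF''.2 k (p ∘ₗ u) a ha
      choose x' hx' using fun j : Fin n =>
        hmid b hb (u ↑(s (Pi.single j 1))) ((s (Pi.single j 1)).2)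
      have hiw : ∀ z : Fin n → A,
          i (mkMap x' z) = algebraMap R A b • u ↑(s z) := by
        intro z
        have h1 := mkMap_lift i (u ∘ₗ (LinearMap.ker (p ∘ₗ u)).subtype ∘ₗ s)
          (algebraMap R A b) x' (fun j => by
            simp only [LinearMap.comp_apply, Submodule.coe_subtype]
            exact (hx' j).symm) z
        simpa only [LinearMap.comp_apply, Submodule.coe_subtype] using h1
      obtain ⟨q, t, ht⟩ := hF'.2 n (algebraMap R A c • mkMap (A := A) x') d hd
      have hmem : ∀ e : Fin q → A,
          ((algebraMap R A (b * c)) • ((LinearMap.ker (p ∘ₗ u)).subtype ∘ₗ s ∘ₗ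
            (LinearMap.ker (algebraMap R A c • mkMap (A := A) x')).subtype ∘ₗ t)) e
            ∈ LinearMap.ker u := by
        intro e
        simp only [LinearMap.smul_apply, LinearMap.comp_apply, Submodule.coe_subtype,
          LinearMap.mem_ker, map_smul]
        have h1 : algebraMap R A c • mkMap (A := A) x' (↑(t e)) = 0 := by
          have h2 := (t e).2
          rwa [LinearMap.mem_ker, LinearMap.smul_apply] at h2
        rw [map_mul, mul_comm, mul_smul, ← hiw, ← map_smul, h1, map_zero]
      refine ⟨q, LinearMap.codRestrict (LinearMap.ker u) _ hmem, fun x => ?_⟩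
      have hxu : u ↑x = 0 := x.2
      have hxk : (↑x : Fin k → A) ∈ LinearMap.ker (p ∘ₗ u) := by
        rw [LinearMap.mem_ker, LinearMap.comp_apply, hxu, map_zero]
      obtain ⟨a', ha'⟩ := hs ⟨↑x, hxk⟩
      have hsa' : (↑(s a') : Fin k → A) = algebraMap R A a • ↑x := by
        rw [← ha']; rfl
      have hWa' : a' ∈ LinearMap.ker (algebraMap R A c • mkMap (A := A) x') := by
        rw [LinearMap.mem_ker, LinearMap.smul_apply]
        apply hker c hc
        rw [hiw, hsa', map_smul, hxu, smul_zero, smul_zero]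
      obtain ⟨e, he⟩ := ht ⟨a', hWa'⟩
      refine ⟨e, Subtype.ext ?_⟩
      have hte : (↑(t e) : Fin n → A) = algebraMap R A d • a' := by
        rw [← he]; rfl
      simp only [LinearMap.codRestrict_apply, LinearMap.smul_apply, LinearMap.comp_apply,
        Submodule.coe_subtype, SetLike.val_smul, hte, map_smul, Submodule.coe_smul, hsa']
      rw [map_mul, map_mul, map_mul, map_mul]
      module
  · -- F and F'' coherent ⇒ F' coherent
    rintro hF hF''
    constructor
    · intro γ hγ
      obtain ⟨a, ha, b, hb, c, hc, d, hd, rfl⟩ := hfac4 γ hγ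
      obtain ⟨k, u, hu⟩ := hF.1 a ha
      obtain ⟨n, s, hs⟩ := hF''.2 k (p ∘ₗ u) b hb
      choose x' hx' using fun j : Fin n =>
        hmid c hc (u ↑(s (Pi.single j 1))) ((s (Pi.single j 1)).2)
      have hiw : ∀ z : Fin n → A,
          i (mkMap x' z) = algebraMap R A c • u ↑(s z) := by
        intro z
        have h1 := mkMap_lift i (u ∘ₗ (LinearMap.ker (p ∘ₗ u)).subtype ∘ₗ s)
          (algebraMap R A c) x' (fun j => by
            simp only [LinearMap.comp_apply, Submodule.coe_subtype]
            exact (hx' j).symm) z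
        simpa only [LinearMap.comp_apply, Submodule.coe_subtype] using h1
      refine ⟨n, algebraMap R A d • mkMap (A := A) x', fun x'₀ => ?_⟩
      obtain ⟨x, hx⟩ := hu (i x'₀)
      have hxk : x ∈ LinearMap.ker (p ∘ₗ u) := by
        rw [LinearMap.mem_ker, LinearMap.comp_apply, ← hx, map_smul, hpi, smul_zero]
      obtain ⟨a', ha'⟩ := hs ⟨x, hxk⟩
      have hsa' : (↑(s a') : Fin k → A) = algebraMap R A b • x := by
        rw [← ha']; rfl
      have h3 : i (mkMap x' a' - algebraMap R A (a * b * c) • x'₀) = 0 := by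
        rw [map_sub, hiw, hsa', map_smul, ← hx, map_smul, sub_eq_zero,
          map_mul, map_mul]
        module
      have h4 := hker d hd _ h3
      rw [smul_sub, sub_eq_zero] at h4
      refine ⟨a', ?_⟩
      rw [LinearMap.smul_apply, h4, map_mul, mul_comm, mul_smul]
    · intro k u'
      refine aft_ker_transfer hfac2 (LinearMap.ker u') (LinearMap.ker (i ∘ₗ u'))
        (fun x hx => ?_) (fun γ hγ x hx => ?_) (hF.2 k (i ∘ₗ u'))
      · rw [LinearMap.mem_ker] at hx ⊢
        rw [LinearMap.comp_apply, hx, map_zero]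
      · rw [LinearMap.mem_ker] at hx ⊢
        rw [map_smul]
        exact hker γ hγ _ hx
end

section
/- For every ε ∈ ℝ with ε ≥ 0, the R-modules R and I_ε are α-equivalent: for every γ ∈ m there exist R-linear maps f : R → I_ε and g : I_ε → R with f ∘ g = γ·id and g ∘ f = γ·id. If moreover ε ∉ Λ, then R and I_ε are not α-isomorphic: there is no R-module P admitting R-linear maps P → R and P → I_ε that are both α-isomorphisms. -/
set_option synthInstance.maxHeartbeats 1000000
set_option maxHeartbeats 1000000

/-- Let `R` be the ring of a non-discrete height-one valuation `v` on a field `K`, with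
maximal ideal `m`, and for `ε ≥ 0` let `I_ε = {x : v x > ε}`. Then `R` and `I_ε` are
α-equivalent, and if `ε ∉ Λ = v(K^×)` they are not α-isomorphic (there is no `R`-module
`P` with α-isomorphisms to both `R` and `I_ε`). -/
theorem statement8 {K : Type*} [Field K] (v : K → ℝ)
    (hv_mul : ∀ x y : K, x ≠ 0 → y ≠ 0 → v (x * y) = v x + v y)
    (hv_add : ∀ x y : K, x ≠ 0 → y ≠ 0 → x + y ≠ 0 → min (v x) (v y) ≤ v (x + y))
    (hv_dense : Dense (v '' {x : K | x ≠ 0}))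
    (R : Subring K) (hR : ∀ x : K, x ∈ R ↔ x = 0 ∨ 0 ≤ v x)
    (m : Ideal R) (hm : ∀ x : R, x ∈ m ↔ (x : K) = 0 ∨ 0 < v (x : K))
    (ε : ℝ) (hε : 0 ≤ ε)
    (Iε : Ideal R) (hIε : ∀ x : R, x ∈ Iε ↔ (x : K) = 0 ∨ ε < v (x : K)) :
    (∀ γ ∈ m, ∃ (f : R →ₗ[R] ↥Iε) (g : ↥Iε →ₗ[R] R),
      (∀ x : ↥Iε, f (g x) = γ • x) ∧ (∀ x : R, g (f x) = γ • x)) ∧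
    (ε ∉ v '' {x : K | x ≠ 0} →
      ¬ ∃ (P : Type*) (_ : AddCommGroup P) (_ : Module R P)
          (φ : P →ₗ[R] R) (ψ : P →ₗ[R] ↥Iε),
          ((∀ γ ∈ m, ∀ x, φ x = 0 → γ • x = 0) ∧
            (∀ γ ∈ m, ∀ y : R, ∃ x, γ • y = φ x)) ∧
          ((∀ γ ∈ m, ∀ x, ψ x = 0 → γ • x = 0) ∧
            (∀ γ ∈ m, ∀ y : ↥Iε, ∃ x, γ • y = ψ x))) := by
  -- Basic valuation facts
  have v1 : v 1 = 0 := by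
    have h := hv_mul 1 1 one_ne_zero one_ne_zero
    rw [mul_one] at h; linarith
  have vinv : ∀ x : K, x ≠ 0 → v x⁻¹ = - v x := by
    intro x hx
    have h := hv_mul x x⁻¹ hx (inv_ne_zero hx)
    rw [mul_inv_cancel₀ hx, v1] at h; linarith
  have hdense : ∀ lo hi : ℝ, lo < hi → ∃ x : K, x ≠ 0 ∧ lo < v x ∧ v x < hi := by
    intro lo hi h
    obtain ⟨y, ⟨x, hx, hxy⟩, hy⟩ := hv_dense.exists_mem_open (isOpen_Ioo (a := lo) (b := hi))
      ⟨(lo + hi) / 2, by constructor <;> linarith⟩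
    exact ⟨x, hx, by rw [hxy]; exact hy.1, by rw [hxy]; exact hy.2⟩
  constructor
  · -- α-equivalence
    intro γ hγ
    by_cases hγ0 : (γ : K) = 0
    · have hγz : γ = 0 := Subtype.ext hγ0
      refine ⟨0, 0, ?_, ?_⟩ <;> intro x <;> simp [hγz]
    · have hγpos : 0 < v (γ : K) := ((hm γ).1 hγ).resolve_left hγ0
      obtain ⟨a, ha0, ha1, ha2⟩ := hdense ε (ε + v (γ : K)) (by linarith)
      have haR : a ∈ R := (hR a).2 (Or.inr (by linarith))
      set A : R := ⟨a, haR⟩ with hA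
      have hfmem : ∀ x : R, A * x ∈ Iε := by
        intro x
        rcases eq_or_ne (x : K) 0 with h | h
        · refine (hIε _).2 (Or.inl ?_)
          show a * (x : K) = 0
          rw [h, mul_zero]
        · refine (hIε _).2 (Or.inr ?_)
          have hx0 : 0 ≤ v (x : K) := ((hR (x : K)).1 x.2).resolve_left h
          have he : ((A * x : R) : K) = a * (x : K) := rfl
          rw [he, hv_mul a _ ha0 h]; linarith
      have hgmem : ∀ y : ↥Iε, (γ : K) * (((y : R)) : K) * a⁻¹ ∈ R := by
        intro y
        rcases eq_or_ne (((y : R)) : K) 0 with h | h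
        · exact (hR _).2 (Or.inl (by rw [h, mul_zero, zero_mul]))
        · refine (hR _).2 (Or.inr ?_)
          have hyv : ε < v (((y : R)) : K) := ((hIε (y : R)).1 y.2).resolve_left h
          rw [hv_mul _ a⁻¹ (mul_ne_zero hγ0 h) (inv_ne_zero ha0),
            hv_mul _ _ hγ0 h, vinv a ha0]
          linarith
      refine ⟨{ toFun := fun x => ⟨A * x, hfmem x⟩,
                map_add' := fun x y => Subtype.ext (mul_add A x y),
                map_smul' := fun r x => Subtype.ext (by
                  show A * (r * x) = r * (A * x); ring) },
              { toFun := fun y => ⟨(γ : K) * (((y : R)) : K) * a⁻¹, hgmem y⟩,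
                map_add' := fun x y => Subtype.ext (by push_cast; ring),
                map_smul' := fun r x => Subtype.ext (by
                  show (γ : K) * (((r • (x : R) : R)) : K) * a⁻¹
                      = (r : K) * ((γ : K) * (((x : R)) : K) * a⁻¹)
                  push_cast [smul_eq_mul]; ring) }, ?_, ?_⟩
      · intro x
        refine Subtype.ext (Subtype.ext ?_)
        show a * ((γ : K) * (((x : R)) : K) * a⁻¹) = ((((γ • x : ↥Iε) : R)) : K)
        have : ((((γ • x : ↥Iε) : R)) : K) = (γ : K) * (((x : R)) : K) := rfl
        rw [this]; field_simp
      · intro x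
        refine Subtype.ext ?_
        show (γ : K) * (a * (x : K)) * a⁻¹ = (γ : K) * (x : K)
        field_simp
  · -- non α-isomorphism
    rintro hεΛ ⟨P, _, _, φ, ψ, ⟨hφk, hφs⟩, ⟨hψk, hψs⟩⟩
    obtain ⟨g0, hg0ne, hg0pos, -⟩ := hdense 0 1 one_pos
    have hg0R : g0 ∈ R := (hR g0).2 (Or.inr hg0pos.le)
    set γ0 : R := ⟨g0, hg0R⟩ with hγ0def
    have hγ0m : γ0 ∈ m := (hm γ0).2 (Or.inr hg0pos)
    obtain ⟨p0, hp0⟩ := hφs γ0 hγ0m 1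
    have hφp0 : φ p0 = γ0 := by rw [← hp0, smul_eq_mul, mul_one]
    set s : K := (((ψ p0 : R)) : K) with hsdef
    -- key claim
    have key : ∀ p : P, g0 * (((ψ p : R)) : K) = s * ((φ p : R) : K) := by
      intro p
      have h1 : γ0 • (γ0 • p - φ p • p0) = 0 :=
        hφk γ0 hγ0m _ (by
          rw [map_sub, map_smul, map_smul, hφp0, smul_eq_mul, smul_eq_mul, mul_comm, sub_self])
      have h2 : γ0 • ψ (γ0 • p - φ p • p0) = (0 : ↥Iε) := by
        rw [← map_smul, h1, map_zero]
      have h2R : γ0 * (γ0 * (ψ p : R) - φ p * (ψ p0 : R)) = (0 : R) := by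
        have h3 := congrArg (Iε.subtype) h2
        simpa [smul_eq_mul, map_sub, map_smul] using h3
      have h3K : g0 * (g0 * (((ψ p : R)) : K) - ((φ p : R) : K) * s) = 0 := by
        have h4 := congrArg (fun t : R => (t : K)) h2R
        push_cast at h4
        exact h4
      have h5 := (mul_eq_zero.1 h3K).resolve_left hg0ne
      linear_combination h5
    -- s ≠ 0
    have hsne : s ≠ 0 := by
      intro h
      have hψ0 : ψ p0 = 0 := by
        apply Subtype.ext; apply Subtype.ext; exact h
      have h1 : γ0 • p0 = 0 := hψk γ0 hγ0m p0 hψ0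
      have h2 : γ0 * γ0 = 0 := by
        have := congrArg φ h1
        rw [map_smul, hφp0, map_zero, smul_eq_mul] at this
        exact this
      have : (g0 : K) * g0 = 0 := by
        have h3 := congrArg (fun t : R => (t : K)) h2
        push_cast at h3
        exact h3
      exact hg0ne (by
        rcases mul_eq_zero.1 this with h | h <;> exact h)
    have hsv : ε < v s := by
      have := ((hIε (ψ p0 : R)).1 (ψ p0).2).resolve_left hsne
      exact this
    -- lower bound : ε ≤ v s - v g0
    have hlow : ε ≤ v s - v g0 := by
      by_contra hcon
      push_neg at hcon
      obtain ⟨g, hgne, hg1, hg2⟩ := hdense 0 (ε - (v s - v g0)) (by linarith)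
      have hgR : g ∈ R := (hR g).2 (Or.inr hg1.le)
      have hgm : (⟨g, hgR⟩ : R) ∈ m := (hm _).2 (Or.inr hg1)
      obtain ⟨p, hp⟩ := hφs ⟨g, hgR⟩ hgm 1
      have hφp : φ p = ⟨g, hgR⟩ := by rw [← hp, smul_eq_mul, mul_one]
      have hk := key p
      rw [hφp] at hk
      have hψne : (((ψ p : R)) : K) ≠ 0 := by
        intro h
        rw [h, mul_zero] at hk
        exact hgne ((mul_eq_zero.1 hk.symm).resolve_left hsne)
      have hψv : ε < v (((ψ p : R)) : K) := ((hIε (ψ p : R)).1 (ψ p).2).resolve_left hψne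
      have hval := congrArg v hk
      rw [hv_mul _ _ hg0ne hψne, hv_mul _ _ hsne (hgne : ((⟨g, hgR⟩ : R) : K) ≠ 0)] at hval
      have : v ((⟨g, hgR⟩ : R) : K) = v g := rfl
      rw [this] at hval
      linarith
    -- upper bound : v s - v g0 ≤ ε
    have hhigh : v s - v g0 ≤ ε := by
      by_contra hcon
      push_neg at hcon
      set η := (v s - v g0 - ε) / 2 with hη
      have hηpos : 0 < η := by simp [hη]; linarith
      obtain ⟨a, hane, ha1, ha2⟩ := hdense ε (ε + η) (by linarith)
      have haR : a ∈ R := (hR a).2 (Or.inr (by linarith))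
      have haI : (⟨a, haR⟩ : R) ∈ Iε := (hIε _).2 (Or.inr ha1)
      obtain ⟨g, hgne, hg1, hg2⟩ := hdense 0 η hηpos
      have hgR : g ∈ R := (hR g).2 (Or.inr hg1.le)
      have hgm : (⟨g, hgR⟩ : R) ∈ m := (hm _).2 (Or.inr hg1)
      obtain ⟨q, hq⟩ := hψs ⟨g, hgR⟩ hgm ⟨⟨a, haR⟩, haI⟩
      have hqK : (((ψ q : R)) : K) = g * a := by
        have := congrArg (fun y : ↥Iε => (((y : R)) : K)) hq
        simpa [SetLike.val_smul, smul_eq_mul] using this.symm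
      have hk := key q
      rw [hqK] at hk
      have hφqne : ((φ q : R) : K) ≠ 0 := by
        intro h
        rw [h, mul_zero] at hk
        exact hg0ne (by
          rcases mul_eq_zero.1 hk with h' | h'
          · exact h'
          · exact absurd h' (mul_ne_zero hgne hane))
      have hφqv : 0 ≤ v ((φ q : R) : K) := ((hR _).1 (φ q).2).resolve_left hφqne
      have hval := congrArg v hk
      rw [hv_mul _ _ hg0ne (mul_ne_zero hgne hane), hv_mul _ _ hgne hane,
        hv_mul _ _ hsne hφqne] at hval
      linarith
    -- conclude
    have : v s - v g0 = ε := le_antisymm hhigh hlow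
    exact hεΛ ⟨s * g0⁻¹, mul_ne_zero hsne (inv_ne_zero hg0ne), by
      rw [hv_mul _ _ hsne (inv_ne_zero hg0ne), vinv _ hg0ne]; linarith⟩
end

section
/- Every R-module of α-finite type is of α-finite presentation. -/
/-!
Let `β ∈ m`. Every ideal `I` of `R` is `β`-almost principal: choosing `δ ∈ I` with
`v δ < inf v(I) + v β` gives `β I ⊆ δ R`. Density of the value group lets every element of `m`
be written as a product of two elements of `m`, so almost finite generation (with the
constant `β₁ β₂`) passes along `0 → R^k → R^(k+1) → R → 0`; by induction every submodule of
`R^k`, in particular the kernel of a map `R^k → M` whose cokernel is killed by `γ`, contains a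
finitely generated submodule `N₀` with `γ N ⊆ N₀`, which provides the relations.
-/

namespace Submodule

variable {A M M' M'' : Type*} [CommRing A] [AddCommGroup M] [Module A M]
  [AddCommGroup M'] [Module A M'] [AddCommGroup M''] [Module A M'']

def AlmostFG (β : A) (N : Submodule A M) : Prop :=
  ∃ N₀ ≤ N, N₀.FG ∧ ∀ x ∈ N, β • x ∈ N₀

theorem AlmostFG.map {β : A} {N : Submodule A M} (h : N.AlmostFG β) (g : M →ₗ[A] M') :
    (N.map g).AlmostFG β := by
  obtain ⟨N₀, hN₀N, hN₀fg, hN₀⟩ := h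
  refine ⟨N₀.map g, map_mono hN₀N, hN₀fg.map g, ?_⟩
  rintro _ ⟨x, hx, rfl⟩
  exact ⟨β • x, hN₀ x hx, map_smul g β x⟩

theorem FG.exists_fg_le_map_eq {I : Submodule A M''} (hI : I.FG) {f : M →ₗ[A] M''}
    {N : Submodule A M} (hIN : I ≤ N.map f) : ∃ L ≤ N, L.FG ∧ L.map f = I := by
  classical
  obtain ⟨s, rfl⟩ := hI
  obtain ⟨t, htN, rfl⟩ := Finset.subset_set_image_iff.1 (subset_span.trans hIN)
  exact ⟨span A t, span_le.2 htN, ⟨t, rfl⟩, by rw [map_span, Finset.coe_image]⟩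

theorem AlmostFG.of_comap_of_map {g : M' →ₗ[A] M} {f : M →ₗ[A] M''}
    (hgf : LinearMap.range g = LinearMap.ker f) {N : Submodule A M} {β₁ β₂ : A}
    (h₁ : (N.comap g).AlmostFG β₁) (h₂ : (N.map f).AlmostFG β₂) :
    N.AlmostFG (β₁ * β₂) := by
  have h₁ := h₁.map g
  rw [map_comap_eq, hgf, inf_comm] at h₁
  obtain ⟨K₀, hK₀N, hK₀fg, hK₀⟩ := h₁
  obtain ⟨I₀, hI₀N, hI₀fg, hI₀⟩ := h₂
  obtain ⟨L₀, hL₀N, hL₀fg, rfl⟩ := hI₀fg.exists_fg_le_map_eq hI₀N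
  refine ⟨K₀ ⊔ L₀, sup_le (hK₀N.trans inf_le_left) hL₀N, hK₀fg.sup hL₀fg, fun x hx => ?_⟩
  obtain ⟨l, hlL₀, hl⟩ := hI₀ (f x) (mem_map_of_mem hx)
  have hy : β₂ • x - l ∈ N ⊓ LinearMap.ker f :=
    ⟨N.sub_mem (N.smul_mem β₂ hx) (hL₀N hlL₀), by simp [hl]⟩
  have hβx : (β₁ * β₂) • x = β₁ • (β₂ • x - l) + β₁ • l := by
    rw [smul_sub, mul_smul, sub_add_cancel]
  rw [hβx]
  exact add_mem (mem_sup_left (hK₀ _ hy)) (mem_sup_right (L₀.smul_mem β₁ hlL₀))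

theorem almostFG_pi {P : Set A} (hsplit : ∀ β ∈ P, ∃ β₁ ∈ P, ∃ β₂ ∈ P, β = β₁ * β₂)
    (hideal : ∀ β ∈ P, ∀ I : Ideal A, I.AlmostFG β) :
    ∀ (k : ℕ), ∀ β ∈ P, ∀ N : Submodule A (Fin k → A), N.AlmostFG β
  | 0, β, _, N => ⟨⊥, bot_le, fg_bot, fun x _ => by simp [Subsingleton.elim (β • x) 0]⟩
  | k + 1, β, hβ, N => by
    obtain ⟨β₁, hβ₁, β₂, hβ₂, rfl⟩ := hsplit β hβ
    let e := Fin.consLinearEquiv A (fun _ : Fin (k + 1) => A)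
    have h : (N.comap e.toLinearMap).AlmostFG (β₁ * β₂) :=
      .of_comap_of_map (LinearMap.ker_fst A A _).symm
        (almostFG_pi hsplit hideal k β₁ hβ₁ _) (hideal β₂ hβ₂ _)
    simpa only [map_comap_eq_of_surjective e.surjective] using h.map e.toLinearMap

end Submodule


section ValuationRing

variable {K : Type*} [Field K] {v : K → ℝ} {R : Subring K}

theorem val_mul_inv (hv_mul : ∀ x y : K, x ≠ 0 → y ≠ 0 → v (x * y) = v x + v y) {x y : K}
    (hx : x ≠ 0) (hy : y ≠ 0) : v (x * y⁻¹) = v x - v y := by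
  have h := hv_mul (x * y⁻¹) y (mul_ne_zero hx (inv_ne_zero hy)) hy
  rw [inv_mul_cancel_right₀ hy] at h
  linarith

theorem mul_inv_mem_of_val_le (hv_mul : ∀ x y : K, x ≠ 0 → y ≠ 0 → v (x * y) = v x + v y)
    (hR : ∀ x : K, x ∈ R ↔ x = 0 ∨ 0 ≤ v x) {x y : K} (hx : x ≠ 0) (hy : y ≠ 0)
    (hxy : v y ≤ v x) : x * y⁻¹ ∈ R :=
  (hR _).2 (.inr (by rw [val_mul_inv hv_mul hx hy]; linarith))

theorem exists_mul_eq_of_mem (hv_mul : ∀ x y : K, x ≠ 0 → y ≠ 0 → v (x * y) = v x + v y)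
    (hv_dense : Dense (v '' {x : K | x ≠ 0})) (hR : ∀ x : K, x ∈ R ↔ x = 0 ∨ 0 ≤ v x)
    {m : Ideal R} (hm : ∀ x : R, x ∈ m ↔ (x : K) = 0 ∨ 0 < v (x : K)) {β : R} (hβ : β ∈ m) :
    ∃ β₁ ∈ m, ∃ β₂ ∈ m, β = β₁ * β₂ := by
  by_cases hβ0 : (β : K) = 0
  · exact ⟨0, m.zero_mem, 0, m.zero_mem, by simp [Subtype.ext_iff, hβ0]⟩
  have hβv : 0 < v β := ((hm β).1 hβ).resolve_left hβ0
  obtain ⟨_, ⟨d, hd0, rfl⟩, hdpos, hdlt⟩ :=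
    hv_dense.exists_mem_open isOpen_Ioo (Set.nonempty_Ioo.2 hβv)
  have hd0 : d ≠ 0 := hd0
  have hdR : d ∈ R := (hR d).2 (.inr hdpos.le)
  have hqR : (β : K) * d⁻¹ ∈ R := mul_inv_mem_of_val_le hv_mul hR hβ0 hd0 hdlt.le
  refine ⟨⟨d, hdR⟩, (hm _).2 (.inr hdpos), ⟨_, hqR⟩,
    (hm _).2 (.inr (by simp only [val_mul_inv hv_mul hβ0 hd0]; linarith)), ?_⟩
  ext
  simp only [Subring.coe_mul]
  field_simp

theorem Ideal.almostFG_of_mem (hv_mul : ∀ x y : K, x ≠ 0 → y ≠ 0 → v (x * y) = v x + v y)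
    (hR : ∀ x : K, x ∈ R ↔ x = 0 ∨ 0 ≤ v x) {m : Ideal R}
    (hm : ∀ x : R, x ∈ m ↔ (x : K) = 0 ∨ 0 < v (x : K)) {β : R} (hβ : β ∈ m) (I : Ideal R) :
    I.AlmostFG β := by
  by_cases htriv : (β : K) = 0 ∨ I = ⊥
  · refine ⟨⊥, bot_le, Submodule.fg_bot, fun a ha => ?_⟩
    rcases htriv with h | rfl
    · simp [show β = 0 from Subtype.ext h]
    · simp [(Submodule.mem_bot R).1 ha]
  obtain ⟨hβ0, hI⟩ := not_or.1 htriv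
  have hβv : 0 < v β := ((hm β).1 hβ).resolve_left hβ0
  set S := (fun a : R => v a) '' {a | a ∈ I ∧ (a : K) ≠ 0}
  have hSne : S.Nonempty := by
    obtain ⟨a, haI, ha0⟩ := Submodule.exists_mem_ne_zero_of_ne_bot hI
    exact ⟨_, a, ⟨haI, by simpa using ha0⟩, rfl⟩
  have hSbdd : BddBelow S :=
    ⟨0, by rintro _ ⟨a, ⟨-, ha0⟩, rfl⟩; exact ((hR a).1 a.2).resolve_left ha0⟩
  obtain ⟨_, ⟨δ, ⟨hδI, hδ0⟩, rfl⟩, hδ⟩ :=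
    exists_lt_of_csInf_lt hSne (lt_add_of_pos_right (sInf S) hβv)
  refine ⟨Ideal.span {δ}, (Ideal.span_singleton_le_iff_mem _).2 hδI,
    Submodule.fg_span_singleton δ, fun a haI => ?_⟩
  rw [smul_eq_mul, Ideal.mem_span_singleton']
  by_cases ha0 : (a : K) = 0
  · exact ⟨0, by simp [show a = 0 from Subtype.ext ha0]⟩
  have hβa0 : (β * a : K) ≠ 0 := mul_ne_zero hβ0 ha0
  have hle : v δ ≤ v (β * a) := by
    rw [hv_mul _ _ hβ0 ha0]
    linarith [csInf_le hSbdd ⟨a, ⟨haI, ha0⟩, rfl⟩]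
  refine ⟨⟨_, mul_inv_mem_of_val_le hv_mul hR hβa0 hδ0 hle⟩, Subtype.ext ?_⟩
  simp only [Subring.coe_mul]
  field_simp

end ValuationRing

theorem statement9_general {K : Type*} [Field K] (v : K → ℝ)
    (hv_mul : ∀ x y : K, x ≠ 0 → y ≠ 0 → v (x * y) = v x + v y)
    (hv_dense : Dense (v '' {x : K | x ≠ 0}))
    (R : Subring K) (hR : ∀ x : K, x ∈ R ↔ x = 0 ∨ 0 ≤ v x)
    (m : Ideal R) (hm : ∀ x : R, x ∈ m ↔ (x : K) = 0 ∨ 0 < v (x : K))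
    {M : Type*} [AddCommGroup M] [Module (↥R) M]
    (hM : ∀ γ ∈ m, ∃ (k : ℕ) (u : (Fin k → ↥R) →ₗ[↥R] M), ∀ y : M, ∃ x, γ • y = u x) :
    ∀ γ ∈ m, ∃ (k l : ℕ) (u : (Fin k → ↥R) →ₗ[↥R] M) (w : (Fin l → ↥R) →ₗ[↥R] (Fin k → ↥R)),
      (∀ x, u (w x) = 0) ∧ (∀ x, u x = 0 → ∃ z, γ • x = w z) ∧
      (∀ y : M, ∃ x, γ • y = u x) := by
  intro γ hγ
  obtain ⟨k, u, hu⟩ := hM γ hγ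
  obtain ⟨N₀, hN₀ker, hN₀fg, hN₀⟩ := Submodule.almostFG_pi (P := m)
    (fun β hβ => exists_mul_eq_of_mem hv_mul hv_dense hR hm hβ)
    (fun β hβ => Ideal.almostFG_of_mem hv_mul hR hm hβ) k γ hγ (LinearMap.ker u)
  obtain ⟨l, g, hg⟩ := Submodule.fg_iff_exists_fin_generating_family.1 hN₀fg
  have hw : LinearMap.range (Fintype.linearCombination R g) = N₀ := by
    rw [Fintype.range_linearCombination, hg]
  refine ⟨k, l, u, Fintype.linearCombination R g,
    fun z => hN₀ker (hw ▸ LinearMap.mem_range_self _ z), fun x hx => ?_, hu⟩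
  obtain ⟨z, hz⟩ := hw ▸ hN₀ x hx
  exact ⟨z, hz.symm⟩

/-- Let `R` be the ring of a non-discrete height-one valuation `v` on a field `K`, with
maximal ideal `m`. Every `R`-module of α-finite type is of α-finite presentation. -/
theorem statement9 {K : Type*} [Field K] (v : K → ℝ)
    (hv_mul : ∀ x y : K, x ≠ 0 → y ≠ 0 → v (x * y) = v x + v y)
    (hv_add : ∀ x y : K, x ≠ 0 → y ≠ 0 → x + y ≠ 0 → min (v x) (v y) ≤ v (x + y))
    (hv_dense : Dense (v '' {x : K | x ≠ 0}))
    (R : Subring K) (hR : ∀ x : K, x ∈ R ↔ x = 0 ∨ 0 ≤ v x)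
    (m : Ideal R) (hm : ∀ x : R, x ∈ m ↔ (x : K) = 0 ∨ 0 < v (x : K))
    {M : Type*} [AddCommGroup M] [Module (↥R) M]
    (hM : ∀ γ ∈ m, ∃ (k : ℕ) (u : (Fin k → ↥R) →ₗ[↥R] M), ∀ y : M, ∃ x, γ • y = u x) :
    ∀ γ ∈ m, ∃ (k l : ℕ) (u : (Fin k → ↥R) →ₗ[↥R] M) (w : (Fin l → ↥R) →ₗ[↥R] (Fin k → ↥R)),
      (∀ x, u (w x) = 0) ∧ (∀ x, u x = 0 → ∃ z, γ • x = w z) ∧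
      (∀ y : M, ∃ x, γ • y = u x) :=
  statement9_general v hv_mul hv_dense R hR m hm hM
end

section
/- Every R-submodule of an R-module of α-finite type is of α-finite type. -/
set_option synthInstance.maxHeartbeats 1000000
set_option maxHeartbeats 1000000

section Aux

variable {K : Type*} [Field K] (v : K → ℝ)

lemma factA (hv_mul : ∀ x y : K, x ≠ 0 → y ≠ 0 → v (x * y) = v x + v y)
    (R : Subring K) (hR : ∀ x : K, x ∈ R ↔ x = 0 ∨ 0 ≤ v x)
    (a b : ↥R) (ha : (a : K) ≠ 0) (hab : (b : K) ≠ 0 → v (a : K) ≤ v (b : K)) :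
    ∃ c : ↥R, b = c * a := by
  by_cases hb : (b : K) = 0
  · exact ⟨0, Subtype.ext (by simp [hb])⟩
  · have hc : (b : K) / (a : K) ≠ 0 := div_ne_zero hb ha
    have h1 : v ((b : K) / (a : K) * (a : K)) = v ((b : K) / (a : K)) + v (a : K) :=
      hv_mul _ _ hc ha
    rw [div_mul_cancel₀ _ ha] at h1
    have hvc : 0 ≤ v ((b : K) / (a : K)) := by linarith [hab hb]
    exact ⟨⟨(b : K) / (a : K), (hR _).2 (Or.inr hvc)⟩,
      Subtype.ext (by simp [div_mul_cancel₀ _ ha])⟩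

lemma factB (hv_mul : ∀ x y : K, x ≠ 0 → y ≠ 0 → v (x * y) = v x + v y)
    (R : Subring K) (hR : ∀ x : K, x ∈ R ↔ x = 0 ∨ 0 ≤ v x)
    (m : Ideal R) (hm : ∀ x : R, x ∈ m ↔ (x : K) = 0 ∨ 0 < v (x : K))
    (I : Ideal ↥R) (δ : ↥R) (hδ : δ ∈ m) :
    ∃ a ∈ I, ∀ x ∈ I, ∃ c : ↥R, δ * x = c * a := by
  by_cases hI : ∃ x₀ ∈ I, (x₀ : K) ≠ 0
  case neg =>
    push_neg at hI
    refine ⟨0, I.zero_mem, fun x hx => ⟨0, ?_⟩⟩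
    have hx0 : x = 0 := Subtype.ext (hI x hx)
    simp [hx0]
  obtain ⟨x₀, hx₀I, hx₀⟩ := hI
  by_cases hδ0 : (δ : K) = 0
  · refine ⟨x₀, hx₀I, fun x hx => ⟨0, ?_⟩⟩
    have h0 : δ = 0 := Subtype.ext hδ0
    simp [h0]
  have hpos : 0 < v (δ : K) := ((hm δ).1 hδ).resolve_left hδ0
  set S : Set ℝ := {r | ∃ x : ↥R, x ∈ I ∧ (x : K) ≠ 0 ∧ v (x : K) = r} with hSdef
  have hSne : S.Nonempty := ⟨v (x₀ : K), x₀, hx₀I, hx₀, rfl⟩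
  have hbdd : BddBelow S := by
    refine ⟨0, ?_⟩
    rintro r ⟨x, hxI, hx0, rfl⟩
    exact ((hR x).1 x.2).resolve_left hx0
  obtain ⟨t, ⟨a, haI, ha0, rfl⟩, hlt⟩ :=
    exists_lt_of_csInf_lt hSne (by linarith : sInf S < sInf S + v (δ : K))
  refine ⟨a, haI, fun x hx => ?_⟩
  by_cases hx0 : (x : K) = 0
  · refine ⟨0, ?_⟩
    have h0 : x = 0 := Subtype.ext hx0
    simp [h0]
  have hxS : sInf S ≤ v (x : K) := csInf_le hbdd ⟨x, hx, hx0, rfl⟩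
  apply factA v hv_mul R hR a (δ * x) ha0
  intro _
  have hmul : ((δ * x : ↥R) : K) = (δ : K) * (x : K) := rfl
  rw [hmul, hv_mul _ _ hδ0 hx0]
  linarith

lemma factC (hv_mul : ∀ x y : K, x ≠ 0 → y ≠ 0 → v (x * y) = v x + v y)
    (hv_dense : Dense (v '' {x : K | x ≠ 0}))
    (R : Subring K) (hR : ∀ x : K, x ∈ R ↔ x = 0 ∨ 0 ≤ v x)
    (m : Ideal R) (hm : ∀ x : R, x ∈ m ↔ (x : K) = 0 ∨ 0 < v (x : K))
    (δ : ↥R) (hδ : δ ∈ m) (hδ0 : (δ : K) ≠ 0) :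
    ∃ δ₁ δ₂ : ↥R, δ₁ ∈ m ∧ δ₂ ∈ m ∧ δ = δ₁ * δ₂ := by
  have hpos : 0 < v (δ : K) := ((hm δ).1 hδ).resolve_left hδ0
  obtain ⟨t, ht, htS⟩ : ∃ t ∈ Set.Ioo (0 : ℝ) (v (δ : K)), t ∈ v '' {x : K | x ≠ 0} := by
    have := hv_dense.exists_mem_open isOpen_Ioo
      (⟨v (δ : K) / 2, by constructor <;> linarith⟩ : (Set.Ioo (0:ℝ) (v (δ:K))).Nonempty)
    obtain ⟨t, htS, htO⟩ := this
    exact ⟨t, htO, htS⟩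
  obtain ⟨x₁, hx₁ne, rfl⟩ := htS
  obtain ⟨h1, h2⟩ := ht
  have hx₁R : x₁ ∈ R := (hR x₁).2 (Or.inr (le_of_lt h1))
  have hq : (δ : K) / x₁ ≠ 0 := div_ne_zero hδ0 hx₁ne
  have hv2 : v ((δ : K) / x₁ * x₁) = v ((δ : K) / x₁) + v x₁ := hv_mul _ _ hq hx₁ne
  rw [div_mul_cancel₀ _ hx₁ne] at hv2
  have hvq : 0 < v ((δ : K) / x₁) := by linarith
  have hqR : (δ : K) / x₁ ∈ R := (hR _).2 (Or.inr (le_of_lt hvq))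
  refine ⟨⟨x₁, hx₁R⟩, ⟨(δ : K) / x₁, hqR⟩, ?_, ?_, ?_⟩
  · exact (hm _).2 (Or.inr h1)
  · exact (hm _).2 (Or.inr hvq)
  · exact Subtype.ext (by rw [show ((⟨x₁,hx₁R⟩ * ⟨(δ:K)/x₁,hqR⟩ : ↥R) : K) = x₁ * ((δ:K)/x₁) from rfl, mul_div_cancel₀ _ hx₁ne])

lemma keyP (hv_mul : ∀ x y : K, x ≠ 0 → y ≠ 0 → v (x * y) = v x + v y)
    (hv_dense : Dense (v '' {x : K | x ≠ 0}))
    (R : Subring K) (hR : ∀ x : K, x ∈ R ↔ x = 0 ∨ 0 ≤ v x)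
    (m : Ideal R) (hm : ∀ x : R, x ∈ m ↔ (x : K) = 0 ∨ 0 < v (x : K)) :
    ∀ (k : ℕ) {M : Type*} [AddCommGroup M] [Module ↥R M]
      (f : M →ₗ[↥R] (Fin k → ↥R)), Function.Injective f →
      ∀ δ ∈ m, ∃ (j : ℕ) (w : (Fin j → ↥R) →ₗ[↥R] M), ∀ y : M, ∃ x, δ • y = w x := by
  intro k
  induction k with
  | zero =>
    intro M _ _ f hf δ hδ
    refine ⟨0, 0, fun y => ⟨0, ?_⟩⟩
    have hy : y = 0 := by
      apply hf
      exact Subsingleton.elim _ _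
    simp [hy]
  | succ k ih =>
    intro M _ _ f hf δ hδ
    by_cases hδ0 : (δ : K) = 0
    · refine ⟨0, 0, fun y => ⟨0, ?_⟩⟩
      have h0 : δ = 0 := Subtype.ext hδ0
      simp [h0]
    obtain ⟨δ₁, δ₂, hδ₁, hδ₂, hsplit⟩ := factC v hv_mul hv_dense R hR m hm δ hδ hδ0
    set π : M →ₗ[↥R] ↥R := (LinearMap.proj (Fin.last k)).comp f with hπ
    obtain ⟨a, haI, ha⟩ := factB v hv_mul R hR m hm (LinearMap.range π) δ₁ hδ₁
    obtain ⟨n₀, hn₀⟩ := haI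
    set M₀ : Submodule ↥R M := LinearMap.ker π with hM₀
    set g : ↥M₀ →ₗ[↥R] (Fin k → ↥R) :=
      (LinearMap.funLeft ↥R ↥R Fin.castSucc).comp (f.comp M₀.subtype) with hg
    have hginj : Function.Injective g := by
      intro z₁ z₂ hz
      apply Subtype.ext
      apply hf
      funext i
      refine Fin.lastCases ?_ (fun i => ?_) i
      · have h1 : π (z₁ : M) = 0 := z₁.2
        have h2 : π (z₂ : M) = 0 := z₂.2
        simp only [hπ, LinearMap.comp_apply, LinearMap.proj_apply] at h1 h2
        rw [h1, h2]
      · exact congrFun hz i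
    obtain ⟨j, w₀, hw₀⟩ := ih g hginj δ₂ hδ₂
    refine ⟨j + 1,
      (M₀.subtype.comp (w₀.comp (LinearMap.funLeft ↥R ↥R Fin.castSucc)))
        + (LinearMap.proj (Fin.last j)).smulRight n₀, fun y => ?_⟩
    obtain ⟨c, hc⟩ := ha (π y) ⟨y, rfl⟩
    have hz : δ₁ • y - c • n₀ ∈ M₀ := by
      have : π (δ₁ • y - c • n₀) = δ₁ * π y - c * π n₀ := by
        rw [map_sub, map_smul, map_smul, smul_eq_mul, smul_eq_mul]
      rw [hM₀, LinearMap.mem_ker, this, hn₀, hc, sub_self]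
    obtain ⟨x₀, hx₀⟩ := hw₀ ⟨_, hz⟩
    refine ⟨Fin.snoc x₀ (δ₂ * c), ?_⟩
    have hval : ((w₀ x₀ : ↥M₀) : M) = δ₂ • (δ₁ • y - c • n₀) := by
      have := congrArg Subtype.val hx₀
      simpa using this.symm
    have hfl : (LinearMap.funLeft ↥R ↥R Fin.castSucc) (Fin.snoc x₀ (δ₂ * c)) = x₀ := by
      funext i
      simp [LinearMap.funLeft_apply, Fin.snoc_castSucc]
    simp only [LinearMap.add_apply, LinearMap.comp_apply, LinearMap.smulRight_apply,
      Submodule.coe_subtype, LinearMap.proj_apply, hfl, Fin.snoc_last, hval]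
    rw [hsplit, smul_sub, smul_smul, smul_smul, mul_comm δ₁ δ₂, sub_add_cancel]

end Aux


/-- Let `R` be the ring of a non-discrete height-one valuation `v` on a field `K`, with
maximal ideal `m`. Every `R`-submodule of an `R`-module of α-finite type is of α-finite
type. -/
theorem statement10 {K : Type*} [Field K] (v : K → ℝ)
    (hv_mul : ∀ x y : K, x ≠ 0 → y ≠ 0 → v (x * y) = v x + v y)
    (hv_add : ∀ x y : K, x ≠ 0 → y ≠ 0 → x + y ≠ 0 → min (v x) (v y) ≤ v (x + y))
    (hv_dense : Dense (v '' {x : K | x ≠ 0}))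
    (R : Subring K) (hR : ∀ x : K, x ∈ R ↔ x = 0 ∨ 0 ≤ v x)
    (m : Ideal R) (hm : ∀ x : R, x ∈ m ↔ (x : K) = 0 ∨ 0 < v (x : K))
    {M : Type*} [AddCommGroup M] [Module (↥R) M]
    (hM : ∀ γ ∈ m, ∃ (k : ℕ) (u : (Fin k → ↥R) →ₗ[↥R] M), ∀ y : M, ∃ x, γ • y = u x)
    (N : Submodule (↥R) M) :
    ∀ γ ∈ m, ∃ (k : ℕ) (u : (Fin k → ↥R) →ₗ[↥R] ↥N), ∀ y : ↥N, ∃ x, γ • y = u x := by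
  intro γ hγ
  by_cases hγ0 : (γ : K) = 0
  · refine ⟨0, 0, fun y => ⟨0, ?_⟩⟩
    have h0 : γ = 0 := Subtype.ext hγ0
    simp [h0]
  obtain ⟨γ', δ, hγ', hδ, hsplit⟩ := factC v hv_mul hv_dense R hR m hm γ hγ hγ0
  obtain ⟨k, u, hu⟩ := hM γ' hγ'
  set N' : Submodule ↥R (Fin k → ↥R) := N.comap u with hN'
  obtain ⟨j, w, hw⟩ := keyP v hv_mul hv_dense R hR m hm k N'.subtype
    (Submodule.injective_subtype N') δ hδ
  refine ⟨j, (LinearMap.codRestrict N (u.comp N'.subtype) (fun x => x.2)).comp w,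
    fun y => ?_⟩
  obtain ⟨x, hx⟩ := hu (y : M)
  have hxN : x ∈ N' := by
    rw [hN', Submodule.mem_comap, ← hx]
    exact N.smul_mem γ' y.2
  obtain ⟨z, hz⟩ := hw ⟨x, hxN⟩
  refine ⟨z, ?_⟩
  apply Subtype.ext
  have hwz : ((w z : ↥N') : Fin k → ↥R) = δ • x := by
    have := congrArg Subtype.val hz
    simpa using this.symm
  have : ((((LinearMap.codRestrict N (u.comp N'.subtype) (fun x => x.2)).comp w) z : ↥N) : M)
      = u ((w z : ↥N') : Fin k → ↥R) := rfl
  rw [this, hwz, map_smul, ← hx, Submodule.coe_smul, smul_smul,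
    mul_comm δ γ', ← hsplit]
end

section
/- Let ϖ be a nonzero element of m, R̂ = lim_n R/ϖ^n R, and for an R-module M let M̂ = lim_n M/ϖ^n M. If the R-module M/ϖM is of α-finite type, then M̂ is an R̂-module of α-finite type: for every γ ∈ m there exist k ∈ ℕ and an R̂-linear map R̂^k → M̂ whose cokernel is annihilated by the image of γ in R̂. -/
/-!
Since the value group is dense, there is `δ ∈ m` with `δ²` dividing both `γ` and `ϖ`. Lifting a
map `R^k → M/ϖM` whose cokernel is killed by `δ` gives `f : R^k → M` with `δ M ⊆ f(R^k) + ϖ M`;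
applying this twice and using `δ² ∣ ϖ` gives `δ² M ⊆ f(R^k) + δ² ϖ M`. Multiplied by `ϖ^n`, this
improves an approximation of `δ² z` by `f` from precision `δ² ϖ^n` to `δ² ϖ^(n+1)`, so successive
corrections converge `ϖ`-adically: `δ² M̂` lies in the image of `f̂`, hence so does `γ M̂`.
-/

section AdicApproximation

variable {A : Type*} [CommRing A] {M N : Type*} [AddCommGroup M] [Module A M]
  [AddCommGroup N] [Module A N]

theorem mem_span_singleton_pow_smul_top_iff (r : A) (n : ℕ) (x : M) :
    x ∈ (Ideal.span {r} ^ n • ⊤ : Submodule A M) ↔ ∃ c, r ^ n • c = x := by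
  simp [Ideal.span_singleton_pow, Submodule.ideal_span_singleton_smul,
    Submodule.mem_smul_pointwise_iff_exists]

theorem exists_linearMap_smul_eq_add_smul {P : Type*} [AddCommGroup P] [Module A P]
    [Module.Projective A P] (ϖ δ : A)
    (u : P →ₗ[A] M ⧸ (Ideal.span {ϖ} • ⊤ : Submodule A M)) (hu : ∀ y, ∃ x, δ • y = u x) :
    ∃ f : P →ₗ[A] M, ∀ y, ∃ a b, δ • y = f a + ϖ • b := by
  obtain ⟨f, hf⟩ := Module.projective_lifting_property (Submodule.mkQ _) u
    (Submodule.mkQ_surjective _)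
  refine ⟨f, fun y => ?_⟩
  obtain ⟨a, ha⟩ := hu (Submodule.Quotient.mk y)
  have hmem : δ • y - f a ∈ (Ideal.span {ϖ} • ⊤ : Submodule A M) := by
    rw [← Submodule.Quotient.eq, Submodule.Quotient.mk_smul, ha, ← hf]
    rfl
  obtain ⟨b, hb⟩ := (mem_span_singleton_pow_smul_top_iff ϖ 1 _).mp (by rwa [pow_one])
  exact ⟨a, b, by rw [← pow_one ϖ, hb, add_sub_cancel]⟩

theorem exists_mul_self_smul_eq_add_smul (f : N →ₗ[A] M) {δ ϖ : A} (hδϖ : δ * δ ∣ ϖ)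
    (h : ∀ y, ∃ a b, δ • y = f a + ϖ • b) (y : M) :
    ∃ a b, (δ * δ) • y = f a + (δ * δ * ϖ) • b := by
  obtain ⟨s, rfl⟩ := hδϖ
  obtain ⟨a, b, hab⟩ := h y
  obtain ⟨a', b', hab'⟩ := h b
  refine ⟨δ • a + (δ * δ * s) • a', s • b', ?_⟩
  rw [map_add, map_smul, map_smul]
  linear_combination (norm := module) δ • hab + (δ * δ * s) • hab'

theorem exists_map_eq_smul_of_forall_smul_eq_add_smul {ϖ u : A} (f : N →ₗ[A] M)
    (h : ∀ y, ∃ a b, u • y = f a + (u * ϖ) • b) (y : AdicCompletion (Ideal.span {ϖ}) M) :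
    ∃ x, AdicCompletion.map _ f x = u • y := by
  obtain ⟨z, rfl⟩ := AdicCompletion.mk_surjective _ M y
  choose a b hab using h
  choose c hc using fun n => (mem_span_singleton_pow_smul_top_iff ϖ n (z (n + 1) - z n)).mp
    (SModEq.sub_mem.mp (z.property n.le_succ).symm)
  let w : ℕ → M := fun n => Nat.rec (z 0) (fun n wn => b (wn + c n)) n
  let x : ℕ → N := fun n => ∑ i ∈ Finset.range n, ϖ ^ i • a (w i + c i)
  have hx : ∀ n, u • z n - f (x n) = (u * ϖ ^ n) • w n := by
    intro n
    induction n with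
    | zero => simp [x, w]
    | succ n ih =>
      simp only [x, w, Finset.sum_range_succ, map_add, map_smul]
      linear_combination (norm := module) ih - u • hc n + ϖ ^ n • hab (w n + c n)
  have hx_cauchy : ∀ n, x n ≡ x (n + 1) [SMOD (Ideal.span {ϖ} ^ n • ⊤ : Submodule A N)] := by
    intro n
    refine SModEq.sub_mem.mpr ((mem_span_singleton_pow_smul_top_iff ϖ n _).mpr
      ⟨-a (w n + c n), ?_⟩)
    simp [x, Finset.sum_range_succ]
  refine ⟨AdicCompletion.mk _ N (AdicCompletion.AdicCauchySequence.mk _ N x hx_cauchy), ?_⟩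
  rw [← map_smul, AdicCompletion.map_mk]
  ext n
  simp only [AdicCompletion.mk_apply_coe, Submodule.mkQ_apply,
    AdicCompletion.AdicCauchySequence.map_apply_coe, AdicCompletion.AdicCauchySequence.mk_coe,
    AdicCompletion.AdicCauchySequence.smul_apply]
  rw [Submodule.Quotient.eq]
  refine (mem_span_singleton_pow_smul_top_iff ϖ n _).mpr ⟨-(u • w n), ?_⟩
  linear_combination (norm := module) hx n

end AdicApproximation

section ValuationRing

variable {K : Type*} [Field K]

theorem exists_mem_mul_self_dvd_of_le_val (v : K → ℝ)
    (hv_mul : ∀ x y : K, x ≠ 0 → y ≠ 0 → v (x * y) = v x + v y)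
    (hv_dense : Dense (v '' {x : K | x ≠ 0}))
    (R : Subring K) (hR : ∀ x : K, x ∈ R ↔ x = 0 ∨ 0 ≤ v x)
    (m : Ideal R) (hm : ∀ x : R, x ∈ m ↔ (x : K) = 0 ∨ 0 < v (x : K))
    {ε : ℝ} (hε : 0 < ε) : ∃ δ ∈ m, ∀ x : R, ε ≤ v x → δ * δ ∣ x := by
  obtain ⟨_, ⟨d, hd0, rfl⟩, hvd_pos, hvd_lt⟩ :=
    hv_dense.exists_mem_open isOpen_Ioo (Set.nonempty_Ioo.mpr (half_pos hε))
  have hdd : d * d ≠ 0 := mul_ne_zero hd0 hd0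
  refine ⟨⟨d, (hR d).mpr (Or.inr hvd_pos.le)⟩, (hm _).mpr (Or.inr hvd_pos), fun x hvx => ?_⟩
  by_cases hx0 : (x : K) = 0
  · exact (Subtype.ext hx0 : x = 0) ▸ dvd_zero _
  have hv_one := hv_mul 1 1 one_ne_zero one_ne_zero
  have hv_dd := hv_mul d d hd0 hd0
  have hv_dd_inv := hv_mul (d * d) (d * d)⁻¹ hdd (inv_ne_zero hdd)
  have hv_quot := hv_mul x (d * d)⁻¹ hx0 (inv_ne_zero hdd)
  rw [mul_one] at hv_one
  rw [mul_inv_cancel₀ hdd] at hv_dd_inv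
  refine ⟨⟨x * (d * d)⁻¹, (hR _).mpr (Or.inr (by linarith))⟩, Subtype.ext ?_⟩
  push_cast
  rw [mul_comm, inv_mul_cancel_right₀ hdd]

theorem exists_mem_mul_self_dvd_and_mul_self_dvd (v : K → ℝ)
    (hv_mul : ∀ x y : K, x ≠ 0 → y ≠ 0 → v (x * y) = v x + v y)
    (hv_dense : Dense (v '' {x : K | x ≠ 0}))
    (R : Subring K) (hR : ∀ x : K, x ∈ R ↔ x = 0 ∨ 0 ≤ v x)
    (m : Ideal R) (hm : ∀ x : R, x ∈ m ↔ (x : K) = 0 ∨ 0 < v (x : K))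
    {γ ϖ : R} (hγ : γ ∈ m) (hϖ : ϖ ∈ m) (hϖ0 : ϖ ≠ 0) :
    ∃ δ ∈ m, δ * δ ∣ γ ∧ δ * δ ∣ ϖ := by
  have hvϖ : 0 < v ϖ := ((hm ϖ).mp hϖ).resolve_left (by exact_mod_cast hϖ0)
  by_cases hγ0 : γ = 0
  · obtain ⟨δ, hδ, hdvd⟩ := exists_mem_mul_self_dvd_of_le_val v hv_mul hv_dense R hR m hm hvϖ
    exact ⟨δ, hδ, hγ0 ▸ dvd_zero _, hdvd ϖ le_rfl⟩
  have hvγ : 0 < v γ := ((hm γ).mp hγ).resolve_left (by exact_mod_cast hγ0)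
  obtain ⟨δ, hδ, hdvd⟩ :=
    exists_mem_mul_self_dvd_of_le_val v hv_mul hv_dense R hR m hm (lt_min hvγ hvϖ)
  exact ⟨δ, hδ, hdvd γ (min_le_left _ _), hdvd ϖ (min_le_right _ _)⟩

end ValuationRing

theorem statement12_general {K : Type*} [Field K] (v : K → ℝ)
    (hv_mul : ∀ x y : K, x ≠ 0 → y ≠ 0 → v (x * y) = v x + v y)
    (hv_dense : Dense (v '' {x : K | x ≠ 0}))
    (R : Subring K) (hR : ∀ x : K, x ∈ R ↔ x = 0 ∨ 0 ≤ v x)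
    (m : Ideal R) (hm : ∀ x : R, x ∈ m ↔ (x : K) = 0 ∨ 0 < v (x : K))
    (ϖ : ↥R) (hϖ0 : ϖ ≠ 0) (hϖm : ϖ ∈ m)
    {M : Type*} [AddCommGroup M] [Module (↥R) M]
    (hM : ∀ γ ∈ m, ∃ (k : ℕ)
      (u : (Fin k → ↥R) →ₗ[↥R] (M ⧸ (Ideal.span {ϖ} • (⊤ : Submodule (↥R) M)))),
      ∀ y, ∃ x, γ • y = u x) :
    ∀ γ ∈ m, ∃ (k : ℕ)
      (u : (Fin k → AdicCompletion (Ideal.span {ϖ}) (↥R))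
            →ₗ[AdicCompletion (Ideal.span {ϖ}) (↥R)] AdicCompletion (Ideal.span {ϖ}) M),
      ∀ y, ∃ x, algebraMap (↥R) (AdicCompletion (Ideal.span {ϖ}) (↥R)) γ • y = u x := by
  intro γ hγ
  obtain ⟨δ, hδm, ⟨ρ, rfl⟩, hδϖ⟩ :=
    exists_mem_mul_self_dvd_and_mul_self_dvd v hv_mul hv_dense R hR m hm hγ hϖm hϖ0
  obtain ⟨k, u, hu⟩ := hM δ hδm
  obtain ⟨f, hf⟩ := exists_linearMap_smul_eq_add_smul ϖ δ u hu
  refine ⟨k, AdicCompletion.map _ f ∘ₗ (AdicCompletion.piEquivFin _ k).symm.toLinearMap,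
    fun y => ?_⟩
  obtain ⟨x, hx⟩ := exists_map_eq_smul_of_forall_smul_eq_add_smul f
    (exists_mul_self_smul_eq_add_smul f hδϖ hf) y
  refine ⟨AdicCompletion.piEquivFin _ k (ρ • x), ?_⟩
  rw [algebraMap_smul, LinearMap.comp_apply, LinearEquiv.coe_toLinearMap,
    LinearEquiv.symm_apply_apply, LinearMap.map_smul_of_tower, hx, smul_smul, mul_comm]

/-- Let `R` be the ring of a non-discrete height-one valuation `v` on a field `K`, with
maximal ideal `m`, and let `ϖ` be a nonzero element of `m`.  Let `R̂` and `M̂` be the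
`ϖ`-adic completions of `R` and of an `R`-module `M`.  If `M/ϖM` is an `R`-module of
α-finite type, then `M̂` is an `R̂`-module of α-finite type. -/
theorem statement12 {K : Type*} [Field K] (v : K → ℝ)
    (hv_mul : ∀ x y : K, x ≠ 0 → y ≠ 0 → v (x * y) = v x + v y)
    (hv_add : ∀ x y : K, x ≠ 0 → y ≠ 0 → x + y ≠ 0 → min (v x) (v y) ≤ v (x + y))
    (hv_dense : Dense (v '' {x : K | x ≠ 0}))
    (R : Subring K) (hR : ∀ x : K, x ∈ R ↔ x = 0 ∨ 0 ≤ v x)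
    (m : Ideal R) (hm : ∀ x : R, x ∈ m ↔ (x : K) = 0 ∨ 0 < v (x : K))
    (ϖ : ↥R) (hϖ0 : ϖ ≠ 0) (hϖm : ϖ ∈ m)
    {M : Type*} [AddCommGroup M] [Module (↥R) M]
    (hM : ∀ γ ∈ m, ∃ (k : ℕ)
      (u : (Fin k → ↥R) →ₗ[↥R] (M ⧸ (Ideal.span {ϖ} • (⊤ : Submodule (↥R) M)))),
      ∀ y, ∃ x, γ • y = u x) :
    ∀ γ ∈ m, ∃ (k : ℕ)
      (u : (Fin k → AdicCompletion (Ideal.span {ϖ}) (↥R))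
            →ₗ[AdicCompletion (Ideal.span {ϖ}) (↥R)] AdicCompletion (Ideal.span {ϖ}) M),
      ∀ y, ∃ x, algebraMap (↥R) (AdicCompletion (Ideal.span {ϖ}) (↥R)) γ • y = u x :=
  statement12_general v hv_mul hv_dense R hR m hm ϖ hϖ0 hϖm hM
end

section
/- For every integer n ≥ 1 there exists a unique ring homomorphism θ_n : W_n(A/pA) → A/p^nA such that for every Witt vector x = (x_0, …, x_{n-1}) ∈ W_n(A/p^nA), θ_n applied to the image of x under the map W_n(A/p^nA) → W_n(A/pA) induced by the projection A/p^nA → A/pA equals Σ_{i=0}^{n-1} p^i · x_i^{p^{n-i}}. Moreover, for every n ≥ 1 the composite of θ_{n+1} : W_{n+1}(A/pA) → A/p^{n+1}A with the projection A/p^{n+1}A → A/p^nA equals θ_n composed with R∘F : W_{n+1}(A/pA) → W_n(A/pA). -/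
/-- The canonical projection `A ⧸ (a) → A ⧸ (b)` when `b ∣ a`. -/
def qfactor {A : Type*} [CommRing A] {a b : A} (h : b ∣ a) :
    (A ⧸ Ideal.span {a}) →+* A ⧸ Ideal.span {b} :=
  Ideal.Quotient.lift _ (Ideal.Quotient.mk _) fun x hx => by
    rw [Ideal.Quotient.eq_zero_iff_mem]
    exact Ideal.span_singleton_le_span_singleton.mpr h hx

/-! `θ_n` is the `n`-th ghost component `w_n(x) = Σ_{i ≤ n} p^i x_i^{p^(n-i)}` on `W(A/p^n)`,
pushed down along the surjection `W(A/p^n) → W_n(A/p)`. It descends because if `p ∣ x_i` for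
`i < n`, every term of `w_n(x)` is divisible by `p^n`, and it is unique by surjectivity. The
compatibility with `R ∘ F` is the identity `w_n ∘ F = w_(n+1)` combined with the naturality of
ghost components and of `F`. -/

section qfactor

variable {A : Type*} [CommRing A] {a b : A}

theorem qfactor_eq_factor (h : b ∣ a) :
    qfactor h = Ideal.Quotient.factor (Ideal.span_singleton_le_span_singleton.mpr h) :=
  rfl

theorem qfactor_surjective (h : b ∣ a) : Function.Surjective (qfactor h) :=
  Ideal.Quotient.factor_surjective (Ideal.span_singleton_le_span_singleton.mpr h)

theorem qfactor_comp_qfactor {c : A} (h₁ : b ∣ a) (h₂ : c ∣ b) :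
    (qfactor h₂).comp (qfactor h₁) = qfactor (h₂.trans h₁) :=
  Ideal.Quotient.factor_comp (Ideal.span_singleton_le_span_singleton.mpr h₁)
    (Ideal.span_singleton_le_span_singleton.mpr h₂)

theorem ker_qfactor (h : b ∣ a) :
    RingHom.ker (qfactor h) = Ideal.span {Ideal.Quotient.mk (Ideal.span {a}) b} := by
  rw [qfactor_eq_factor, Ideal.Quotient.factor_ker, Ideal.map_span, Set.image_singleton]

theorem ker_qfactor_natCast_pow (p : ℕ) {n : ℕ} (hn : n ≠ 0) :
    RingHom.ker (qfactor (dvd_pow_self (p : A) hn)) =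
      Ideal.span {(p : A ⧸ Ideal.span {(p : A) ^ n})} := by
  rw [ker_qfactor, map_natCast]

theorem natCast_pow_eq_zero_of_le (p : ℕ) {n m : ℕ} (h : n ≤ m) :
    (p : A ⧸ Ideal.span {(p : A) ^ n}) ^ m = 0 := by
  rw [← map_natCast (Ideal.Quotient.mk _), ← map_pow, Ideal.Quotient.eq_zero_iff_mem,
    Ideal.mem_span_singleton]
  exact pow_dvd_pow _ h

end qfactor

namespace WittVector

variable {p : ℕ} [Fact p.Prime] {B C D : Type*} [CommRing B] [CommRing C] [CommRing D]

theorem map_map (g : C →+* D) (f : B →+* C) (x : WittVector p B) :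
    map g (map f x) = map (g.comp f) x :=
  rfl

theorem map_frobenius (f : B →+* C) (x : WittVector p B) :
    map f (frobenius x) = frobenius (map f x) := by
  ext n
  rw [map_coeff, coeff_frobenius, coeff_frobenius, MvPolynomial.map_aeval,
    MvPolynomial.aeval_def]
  exact MvPolynomial.eval₂Hom_congr (RingHom.ext_int _ _) rfl rfl

theorem ghostComponent_eq_sum (n : ℕ) (x : WittVector p B) :
    ghostComponent n x = ∑ i ∈ Finset.range (n + 1), (p : B) ^ i * x.coeff i ^ p ^ (n - i) := by
  rw [ghostComponent_apply, aeval_wittPolynomial]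

theorem map_ghostComponent (f : B →+* C) (n : ℕ) (x : WittVector p B) :
    f (ghostComponent n x) = ghostComponent n (map f x) := by
  simp [ghostComponent_eq_sum]

theorem ghostComponent_eq_sum_truncate {n : ℕ} (hpn : (p : B) ^ n = 0) (x : WittVector p B) :
    ghostComponent n x =
      ∑ i : Fin n, (p : B) ^ (i : ℕ) * (truncate n x).coeff i ^ p ^ (n - (i : ℕ)) := by
  simp only [ghostComponent_eq_sum, Finset.sum_range_succ, hpn, zero_mul, add_zero,
    coeff_truncate, Fin.sum_univ_eq_sum_range (fun i => (p : B) ^ i * x.coeff i ^ p ^ (n - i))]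

theorem pow_dvd_ghostComponent_of_dvd_coeff_lt {n : ℕ} {x : WittVector p B}
    (hx : ∀ i < n, (p : B) ∣ x.coeff i) : (p : B) ^ n ∣ ghostComponent n x := by
  rw [ghostComponent_eq_sum]
  refine Finset.dvd_sum fun i hi => ?_
  rcases (Finset.mem_range_succ_iff.mp hi).lt_or_eq with hi | rfl
  · have hexp : n ≤ i + p ^ (n - i) := by
      have := Nat.lt_pow_self (n := n - i) (Fact.out : p.Prime).one_lt
      omega
    calc (p : B) ^ n ∣ (p : B) ^ i * (p : B) ^ p ^ (n - i) := by
          rw [← pow_add]; exact pow_dvd_pow _ hexp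
      _ ∣ (p : B) ^ i * x.coeff i ^ p ^ (n - i) :=
          mul_dvd_mul_left _ (pow_dvd_pow_of_dvd (hx i hi) _)
  · exact dvd_mul_right _ _

theorem ker_truncate_comp_map_le_ker_ghostComponent {n : ℕ} (f : B →+* C)
    (hf : RingHom.ker f ≤ Ideal.span {(p : B)}) (hpn : (p : B) ^ n = 0) :
    RingHom.ker ((truncate n).comp (map f)) ≤ RingHom.ker (ghostComponent (p := p) n) := by
  intro x hx
  have hcoeff : ∀ i < n, (p : B) ∣ x.coeff i := fun i hi => by
    rw [← Ideal.mem_span_singleton]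
    refine hf ?_
    have := congrArg (TruncatedWittVector.coeff ⟨i, hi⟩) (RingHom.mem_ker.mp hx)
    simpa [coeff_truncate] using this
  rw [RingHom.mem_ker, ← zero_dvd_iff, ← hpn]
  exact pow_dvd_ghostComponent_of_dvd_coeff_lt hcoeff

theorem existsUnique_lift_ghostComponent {n : ℕ} (f : B →+* C) (hf : Function.Surjective f)
    (hker : RingHom.ker f ≤ Ideal.span {(p : B)}) (hpn : (p : B) ^ n = 0) :
    ∃! θ : TruncatedWittVector p n C →+* B,
      ∀ w : WittVector p B, θ (truncate n (map f w)) = ghostComponent n w := by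
  set π := (truncate n).comp (map (p := p) f)
  have hπ : Function.Surjective π := (truncate_surjective p n C).comp (map_surjective f hf)
  let g : {g : WittVector p B →+* B // RingHom.ker π ≤ RingHom.ker g} :=
    ⟨ghostComponent n, ker_truncate_comp_map_le_ker_ghostComponent f hker hpn⟩
  refine ⟨π.liftOfSurjective hπ g, π.liftOfSurjective_comp_apply hπ g, fun θ hθ => ?_⟩
  exact RingHom.ext <| hπ.forall.mpr fun w =>
    (hθ w).trans (π.liftOfSurjective_comp_apply hπ g w).symm

theorem lift_ghostComponent_succ_eq_frobenius {B' : Type*} [CommRing B'] {n : ℕ}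
    (f : B →+* C) (f' : B' →+* C) (s : B' →+* B) (hs : f.comp s = f')
    (hf' : Function.Surjective f')
    (θ : TruncatedWittVector p n C →+* B) (θ' : TruncatedWittVector p (n + 1) C →+* B')
    (hθ : ∀ w, θ (truncate n (map f w)) = ghostComponent n w)
    (hθ' : ∀ w, θ' (truncate (n + 1) (map f' w)) = ghostComponent (n + 1) w)
    (w : WittVector p C) :
    s (θ' (truncate (n + 1) w)) = θ (truncate n (frobenius w)) := by
  obtain ⟨v, rfl⟩ := map_surjective f' hf' w
  rw [hθ', map_ghostComponent, ← ghostComponent_frobenius, ← hθ, ← hs, ← map_map,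
    map_frobenius]

end WittVector

/-- Let `p` be a prime and `A` a `ℤ_(p)`-algebra.  For every `n ≥ 1` there is a unique
ring homomorphism `θ_n : W_n(A/pA) → A/p^nA` such that, for every Witt vector
`x = (x_0, …, x_{n-1}) ∈ W_n(A/p^nA)`, `θ_n` applied to the reduction of `x` equals
`Σ_{i<n} p^i · x_i^{p^{n-i}}` (Witt vectors of length `n` over `A/p^nA` are written as
truncations of full Witt vectors). Moreover, the composite of `θ_{n+1}` with the
projection `A/p^{n+1}A → A/p^nA` equals `θ_n ∘ (R∘F)`, where the transition map
`R∘F : W_{n+1}(A/pA) → W_n(A/pA)` is characterized on truncations of full Witt vectors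
by `(R∘F)(truncate_{n+1} w) = truncate_n (F w)`. -/
theorem statement15 (p : ℕ) [Fact p.Prime] (A : Type*) [CommRing A] :
    (∀ n : ℕ, ∀ _hn : 1 ≤ n,
      ∃! θ : TruncatedWittVector p n (A ⧸ Ideal.span {(p : A)}) →+*
          A ⧸ Ideal.span {(p : A) ^ n},
        ∀ w : WittVector p (A ⧸ Ideal.span {(p : A) ^ n}),
          θ (WittVector.truncate n (WittVector.map (qfactor (dvd_pow_self (p : A) (by omega))) w)) =
            ∑ i : Fin n, (p : A ⧸ Ideal.span {(p : A) ^ n}) ^ (i : ℕ) *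
              (WittVector.truncate n w).coeff i ^ p ^ (n - (i : ℕ))) ∧
    (∀ n : ℕ, ∀ _hn : 1 ≤ n,
      ∀ (θn : TruncatedWittVector p n (A ⧸ Ideal.span {(p : A)}) →+*
          A ⧸ Ideal.span {(p : A) ^ n})
        (θn1 : TruncatedWittVector p (n + 1) (A ⧸ Ideal.span {(p : A)}) →+*
          A ⧸ Ideal.span {(p : A) ^ (n + 1)}),
        (∀ w : WittVector p (A ⧸ Ideal.span {(p : A) ^ n}),
          θn (WittVector.truncate n (WittVector.map (qfactor (dvd_pow_self (p : A) (by omega))) w)) =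
            ∑ i : Fin n, (p : A ⧸ Ideal.span {(p : A) ^ n}) ^ (i : ℕ) *
              (WittVector.truncate n w).coeff i ^ p ^ (n - (i : ℕ))) →
        (∀ w : WittVector p (A ⧸ Ideal.span {(p : A) ^ (n + 1)}),
          θn1 (WittVector.truncate (n + 1)
              (WittVector.map (qfactor (dvd_pow_self (p : A) (by omega))) w)) =
            ∑ i : Fin (n + 1), (p : A ⧸ Ideal.span {(p : A) ^ (n + 1)}) ^ (i : ℕ) *
              (WittVector.truncate (n + 1) w).coeff i ^ p ^ (n + 1 - (i : ℕ))) →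
        ∀ w : WittVector p (A ⧸ Ideal.span {(p : A)}),
          qfactor (pow_dvd_pow (p : A) (Nat.le_succ n)) (θn1 (WittVector.truncate (n + 1) w)) =
            θn (WittVector.truncate n (WittVector.frobenius w))) := by
  have ghost_eq {n : ℕ} :=
    WittVector.ghostComponent_eq_sum_truncate (natCast_pow_eq_zero_of_le (A := A) p (le_refl n))
  constructor
  · intro n hn
    refine (existsUnique_congr fun θ => forall_congr' fun w => ?_).mp
      (WittVector.existsUnique_lift_ghostComponent _ (qfactor_surjective _)
        (ker_qfactor_natCast_pow p (by omega)).le (natCast_pow_eq_zero_of_le p le_rfl))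
    rw [ghost_eq]
  · intro n hn θn θn1 hθn hθn1
    exact WittVector.lift_ghostComponent_succ_eq_frobenius _ _ _ (qfactor_comp_qfactor _ _)
      (qfactor_surjective _) θn θn1 (fun w => (hθn w).trans (ghost_eq w).symm)
      (fun w => (hθn1 w).trans (ghost_eq w).symm)
end

section
/- For every n ≥ 1 one has ν_n = (R∘F) ∘ ν_{n+1}, and the induced ring homomorphism ν : W(A^♭) → lim_n W_n(A/pA), where the inverse limit is taken along the transition maps R∘F : W_{n+1}(A/pA) → W_n(A/pA), is bijective. -/
/-!
Frobenius on `W(A/pA)` raises every Witt coefficient to the `p`-th power, and the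
projections of `A^♭` satisfy `pr_{n+1}(f)^p = pr_n(f)`; this gives `ν_n = (R∘F) ∘ ν_{n+1}`.
Since `ν_n(x)` only records the first `n` coefficients, the `k`-th coefficient of `x` is
seen through `pr_n` for every `n > k`, and an element of `A^♭` is determined by, and can be
built from, any tail of a compatible system of `p`-th roots.
-/

namespace Perfection

variable {R : Type*} [CommSemiring R] {p : ℕ} [Fact p.Prime] [CharP R p]

theorem coeff_add_pow_pow (f : Perfection R p) (m j : ℕ) :
    coeff R p (m + j) f ^ p ^ j = coeff R p m f := by
  simpa using coeffMonoidHom_pow_p_pow' f m j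

theorem ext_of_le {f g : Perfection R p} (N : ℕ)
    (h : ∀ n, N ≤ n → coeff R p n f = coeff R p n g) : f = g :=
  ext fun m => by
    rw [← coeff_add_pow_pow f m N, ← coeff_add_pow_pow g m N, h _ (Nat.le_add_left N m)]

theorem exists_coeff_eq_of_le (b : ℕ → R) (N : ℕ) (hb : ∀ n, N ≤ n → b (n + 1) ^ p = b n) :
    ∃ f : Perfection R p, ∀ n, N ≤ n → coeff R p n f = b n := by
  let tail : Perfection R p :=
    ⟨fun m => b (m + N), fun m => by
      simpa only [Nat.add_right_comm m 1 N] using hb _ (Nat.le_add_left N m)⟩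
  refine ⟨(frobenius _ p)^[N] tail, fun n hn => ?_⟩
  rw [coeff_iterate_frobenius' tail n N hn, coeff_mk, Nat.sub_add_cancel hn]

end Perfection

namespace WittVector

variable {R : Type*} [CommRing R] {p : ℕ} [Fact p.Prime] [CharP R p]

theorem frobenius_map_coeff_succ (x : WittVector p (Perfection R p)) (n : ℕ) :
    frobenius (map (Perfection.coeff R p (n + 1)) x) = map (Perfection.coeff R p n) x := by
  ext k
  simp only [coeff_frobenius_charP, map_coeff, Perfection.coeff_pow_p']

theorem eq_of_truncate_map_coeff_eq {x y : WittVector p (Perfection R p)}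
    (h : ∀ n, truncate n (map (Perfection.coeff R p n) x) =
      truncate n (map (Perfection.coeff R p n) y)) : x = y := by
  refine WittVector.ext fun k => Perfection.ext_of_le (k + 1) fun n hn => ?_
  simpa only [coeff_truncate, map_coeff] using
    congrArg (TruncatedWittVector.coeff ⟨k, hn⟩) (h n)

theorem coeff_succ_pow_of_truncate_frobenius {v w : WittVector p R} {n : ℕ}
    (h : truncate n (frobenius v) = truncate n w) {k : ℕ} (hk : k < n) :
    v.coeff k ^ p = w.coeff k := by
  simpa only [coeff_truncate, coeff_frobenius_charP] using
    congrArg (TruncatedWittVector.coeff ⟨k, hk⟩) h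

theorem exists_truncate_map_coeff_eq (w : ℕ → WittVector p R)
    (hw : ∀ n, truncate n (frobenius (w (n + 1))) = truncate n (w n)) :
    ∃ x : WittVector p (Perfection R p),
      ∀ n, truncate n (map (Perfection.coeff R p n) x) = truncate n (w n) := by
  choose f hf using fun k => Perfection.exists_coeff_eq_of_le (fun n => (w n).coeff k) (k + 1)
    fun n hn => coeff_succ_pow_of_truncate_frobenius (hw n) hn
  refine ⟨mk p f, fun n => TruncatedWittVector.ext fun ⟨k, hk⟩ => ?_⟩
  simpa only [coeff_truncate, map_coeff, coeff_mk] using hf k n hk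

end WittVector

theorem statement16_general (p : ℕ) [Fact p.Prime] {A : Type*} [CommRing A]
    [CharP (A ⧸ Ideal.span {(p : A)}) p] :
    (∀ (n : ℕ) (x : WittVector p (Ring.Perfection (A ⧸ Ideal.span {(p : A)}) p)),
      WittVector.truncate n
          (WittVector.map (Perfection.coeff (A ⧸ Ideal.span {(p : A)}) p n) x) =
        WittVector.truncate n (WittVector.frobenius
          (WittVector.map (Perfection.coeff (A ⧸ Ideal.span {(p : A)}) p (n + 1)) x))) ∧
    (∀ x y : WittVector p (Ring.Perfection (A ⧸ Ideal.span {(p : A)}) p),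
      (∀ n, WittVector.truncate n
            (WittVector.map (Perfection.coeff (A ⧸ Ideal.span {(p : A)}) p n) x) =
          WittVector.truncate n
            (WittVector.map (Perfection.coeff (A ⧸ Ideal.span {(p : A)}) p n) y)) →
      x = y) ∧
    (∀ g : ∀ n, TruncatedWittVector p n (A ⧸ Ideal.span {(p : A)}),
      (∀ (n : ℕ) (w : WittVector p (A ⧸ Ideal.span {(p : A)})),
        WittVector.truncate (n + 1) w = g (n + 1) →
        WittVector.truncate n (WittVector.frobenius w) = g n) →
      ∃ x : WittVector p (Ring.Perfection (A ⧸ Ideal.span {(p : A)}) p),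
        ∀ n, WittVector.truncate n
            (WittVector.map (Perfection.coeff (A ⧸ Ideal.span {(p : A)}) p n) x) = g n) := by
  refine ⟨fun n x => congrArg _ (WittVector.frobenius_map_coeff_succ x n).symm,
    fun x y => WittVector.eq_of_truncate_map_coeff_eq, fun g hg => ?_⟩
  choose w hw using fun n => WittVector.truncate_surjective p n _ (g n)
  obtain ⟨x, hx⟩ := WittVector.exists_truncate_map_coeff_eq w fun n => by
    rw [hg n _ (hw (n + 1)), hw n]
  exact ⟨x, fun n => (hx n).trans (hw n)⟩

/-- Let `p` be a prime, `A` a `ℤ_(p)`-algebra with `A/pA` nonzero (hence of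
characteristic `p`), and `A^♭ = lim_{x ↦ x^p} A/pA` its perfection, with projections
`pr_n`.  Let `ν_n : W(A^♭) → W_n(A/pA)` be the composite of `W(pr_n)` with truncation.
Then `ν_n = (R∘F) ∘ ν_{n+1}` for every `n`, and the induced map
`ν : W(A^♭) → lim_n W_n(A/pA)` (inverse limit along the transition maps
`R∘F : W_{n+1}(A/pA) → W_n(A/pA)`, characterized on truncations of full Witt vectors by
`(R∘F)(truncate_{n+1} w) = truncate_n (F w)`) is bijective; bijectivity is expressed by
injectivity into the product together with surjectivity onto all compatible families. -/
theorem statement16 (p : ℕ) [Fact p.Prime] {A : Type*} [CommRing A]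
    (hA : ∀ k : ℕ, ¬ p ∣ k → IsUnit (k : A))
    [Nontrivial (A ⧸ Ideal.span {(p : A)})] [CharP (A ⧸ Ideal.span {(p : A)}) p] :
    (∀ (n : ℕ) (x : WittVector p (Ring.Perfection (A ⧸ Ideal.span {(p : A)}) p)),
      WittVector.truncate n
          (WittVector.map (Perfection.coeff (A ⧸ Ideal.span {(p : A)}) p n) x) =
        WittVector.truncate n (WittVector.frobenius
          (WittVector.map (Perfection.coeff (A ⧸ Ideal.span {(p : A)}) p (n + 1)) x))) ∧
    (∀ x y : WittVector p (Ring.Perfection (A ⧸ Ideal.span {(p : A)}) p),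
      (∀ n, WittVector.truncate n
            (WittVector.map (Perfection.coeff (A ⧸ Ideal.span {(p : A)}) p n) x) =
          WittVector.truncate n
            (WittVector.map (Perfection.coeff (A ⧸ Ideal.span {(p : A)}) p n) y)) →
      x = y) ∧
    (∀ g : ∀ n, TruncatedWittVector p n (A ⧸ Ideal.span {(p : A)}),
      (∀ (n : ℕ) (w : WittVector p (A ⧸ Ideal.span {(p : A)})),
        WittVector.truncate (n + 1) w = g (n + 1) →
        WittVector.truncate n (WittVector.frobenius w) = g n) →
      ∃ x : WittVector p (Ring.Perfection (A ⧸ Ideal.span {(p : A)}) p),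
        ∀ n, WittVector.truncate n
            (WittVector.map (Perfection.coeff (A ⧸ Ideal.span {(p : A)}) p n) x) = g n) :=
  statement16_general p
end

section
/- Let A be an integral domain, M a commutative cancellative monoid, u : M → (A, ·) an injective monoid homomorphism, and n ≥ 1 an integer. Assume that for every t ∈ M the equation x^n = u(t) has n distinct roots in A. Let P = {a ∈ A : there exists t ∈ M with a^n = u(t)}, a submonoid of the multiplicative monoid of A. Then: (1) P is cancellative; (2) the map π : P → M sending a to the unique t ∈ M with u(t) = a^n is a surjective monoid homomorphism; (3) for a, b ∈ P, π(a) = π(b) if and only if b = ζ·a for some ζ ∈ μ_n(A); consequently π identifies M with the quotient of P by the submonoid μ_n(A). -/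
/-- Let `A` be an integral domain, `M` a commutative cancellative monoid,
`u : M → (A, ·)` an injective monoid homomorphism, and `n ≥ 1`; assume for every
`t ∈ M` the equation `x^n = u t` has `n` distinct roots in `A`.  Let
`P = {a ∈ A : ∃ t, a^n = u t}`.  Then (1) `P` is cancellative; (2) the map
`π : P → M`, sending `a` to the unique `t` with `u t = a^n`, is a well-defined
surjective monoid homomorphism; (3) `π a = π b` iff `b = ζ·a` for some `n`-th root of
unity `ζ`, so `π` identifies `M` with the quotient of `P` by `μ_n(A)`. -/
theorem statement19 {A : Type*} [CommRing A] [IsDomain A] {M : Type*} [CommMonoid M]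
    (hM : ∀ x y z : M, x * z = y * z → x = y)
    (u : M →* A) (hu : Function.Injective u)
    (n : ℕ) (hn : 1 ≤ n)
    (hroots : ∀ t : M, ∃ s : Finset A, s.card = n ∧ ∀ x : A, x ∈ s ↔ x ^ n = u t) :
    -- (1) `P` is a cancellative monoid
    ((∀ a b c : A, (∃ t, a ^ n = u t) → (∃ t, b ^ n = u t) → (∃ t, c ^ n = u t) →
        a * c = b * c → a = b) ∧
    -- (2) `π` is well defined …
      (∀ a : A, (∃ t, a ^ n = u t) → ∃! t : M, a ^ n = u t) ∧
    -- … sends `1` to `1`, is multiplicative …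
      (∀ t : M, (1 : A) ^ n = u t → t = 1) ∧
      (∀ (a b : A) (ta tb tab : M), a ^ n = u ta → b ^ n = u tb → (a * b) ^ n = u tab →
        tab = ta * tb) ∧
    -- … and is surjective
      (∀ t : M, ∃ a : A, a ^ n = u t) ∧
    -- (3) fibers of `π` are the `μ_n(A)`-orbits
      (∀ (a b : A) (ta tb : M), a ^ n = u ta → b ^ n = u tb →
        (ta = tb ↔ ∃ ζ : A, ζ ^ n = 1 ∧ b = ζ * a))) := by
  classical
  have hPne : ∀ (a : A) (t : M), a ^ n = u t → a ≠ 0 := by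
    intro a t h ha
    subst ha
    rw [zero_pow (by omega : n ≠ 0)] at h
    have h2 : u (t * t) = u (1 * t) := by simp [map_mul, ← h]
    have ht1 := hM t 1 t (hu h2)
    rw [ht1, map_one] at h
    exact zero_ne_one h
  refine ⟨?_, ?_, ?_, ?_, ?_, ?_⟩
  · rintro a b c ⟨ta, ha⟩ ⟨tb, hb⟩ ⟨tc, hc⟩ h
    exact mul_right_cancel₀ (hPne c tc hc) h
  · rintro a ⟨t, ht⟩
    exact ⟨t, ht, fun t' ht' => hu (ht'.symm.trans ht)⟩
  · intro t h
    exact (hu (show u 1 = u t by rw [map_one, ← one_pow n, h])).symm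
  · intro a b ta tb tab ha hb hab
    apply hu
    rw [← hab, map_mul, ← ha, ← hb, mul_pow]
  · intro t
    obtain ⟨s, hcard, hs⟩ := hroots t
    obtain ⟨x, hx⟩ := Finset.card_pos.mp (by omega : 0 < s.card)
    exact ⟨x, (hs x).mp hx⟩
  · intro a b ta tb ha hb
    constructor
    · intro h
      rw [← h] at hb
      obtain ⟨s, hcard, hs⟩ := hroots ta
      obtain ⟨s1, hcard1, hs1⟩ := hroots 1
      have ha0 := hPne a ta ha
      have himg : s1.image (· * a) ⊆ s := by
        intro x hx
        simp only [Finset.mem_image] at hx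
        obtain ⟨ζ, hζ, rfl⟩ := hx
        rw [hs, mul_pow, (hs1 ζ).mp hζ, map_one, one_mul]
        exact ha
      have heq : s1.image (· * a) = s := by
        apply Finset.eq_of_subset_of_card_le himg
        rw [Finset.card_image_of_injective _ (mul_left_injective₀ ha0), hcard1, hcard]
      have hbmem : b ∈ s1.image (· * a) := by
        rw [heq]; exact (hs b).mpr hb
      simp only [Finset.mem_image] at hbmem
      obtain ⟨ζ, hζ, hζb⟩ := hbmem
      refine ⟨ζ, ?_, hζb.symm⟩
      rw [(hs1 ζ).mp hζ, map_one]
    · rintro ⟨ζ, hζ, rfl⟩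
      apply hu
      rw [← ha, ← hb, mul_pow, hζ, one_mul]
end
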